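/- arXiv:2202.08336 — 4 statements merged into one kernel-verified Lean document; each statement's English description precedes it below -/
import Mathlib

section
/- Let a<0<b be real numbers and let (X_N)_{N∈ℕ} be real random variables such that for every N the Laplace transform z ↦ 𝔼[e^{zX_N}] is finite and holomorphic on the strip D = {z∈ℂ : a<Re(z)<b}. Suppose t_N → +∞ and that Ψ_N(z) := 𝔼[e^{zX_N}]·e^{−t_N z²/2} converges locally uniformly on D to a holomorphic function Ψ with Ψ(0)=1. Let h ∈ (a,b) be real with Ψ(h)≠0, and let X_{N,h} have the exponentially tilted law ℙ_{N,h}(dx) = (e^{hx}/𝔼[e^{hX_N}])·ℙ_N(dx), where ℙ_N is the law of X_N. Then 𝔼[e^{z(X_{N,h}−t_N h)}]·e^{−t_N z²/2} converges locally uniformly on the strip {z : a−h<Re(z)<b−h} to Ψ(z+h)/Ψ(h). -/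
open MeasureTheory Filter

/-!
Tilting by `e^{hx}` turns the Laplace transform `φ_N(z)` of `X_N` into `φ_N(z + h) / φ_N(h)`,
and the Gaussian factors recombine exactly, since
`-t(z + h)²/2 + t h²/2 = -t z²/2 - t z h`. Hence the renormalized Laplace transform of
`X_{N,h} - t_N h` equals `Ψ_N(z + h) / Ψ_N(h)` for every `N`, and the claim follows from the
locally uniform convergence of `Ψ_N` on the translated strip and the convergence of the
constants `Ψ_N(h) → Ψ(h) ≠ 0`.
-/

lemma integral_inv_smul_withDensity_exp {α E : Type*} [MeasurableSpace α] [NormedAddCommGroup E]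
    [NormedSpace ℝ E] (μ : Measure α) {f : α → ℝ} (hf : Measurable f)
    (g : α → E) :
    ∫ x, g x ∂((ENNReal.ofReal (∫ x, Real.exp (f x) ∂μ))⁻¹ •
        μ.withDensity (fun x => ENNReal.ofReal (Real.exp (f x)))) =
      (∫ x, Real.exp (f x) ∂μ)⁻¹ • ∫ x, Real.exp (f x) • g x ∂μ := by
  have hc : 0 ≤ ∫ x, Real.exp (f x) ∂μ := integral_nonneg fun x => (Real.exp_pos _).le
  rw [integral_smul_measure, ENNReal.toReal_inv, ENNReal.toReal_ofReal hc,
    integral_withDensity_eq_integral_toReal_smul (by fun_prop) (by simp)]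
  simp_rw [ENNReal.toReal_ofReal (Real.exp_pos _).le]

lemma integral_cexp_mul_sub_tilted (μ : Measure ℝ) (h : ℝ) (z s : ℂ) :
    ∫ x : ℝ, Complex.exp (z * ((x : ℂ) - s)) ∂((ENNReal.ofReal (∫ x, Real.exp (h * x) ∂μ))⁻¹ •
        μ.withDensity (fun x => ENNReal.ofReal (Real.exp (h * x)))) =
      Complex.exp (-(z * s)) * (∫ x : ℝ, Complex.exp (h * x) ∂μ)⁻¹ *
        ∫ x : ℝ, Complex.exp ((z + h) * x) ∂μ := by
  have hcast : ∀ x : ℝ, (Real.exp (h * x) : ℂ) = Complex.exp (h * x) := by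
    intro x; push_cast; rfl
  have hnorm : ∫ x : ℝ, Complex.exp (h * x) ∂μ = ((∫ x, Real.exp (h * x) ∂μ : ℝ) : ℂ) := by
    simp_rw [← hcast]; exact integral_ofReal
  rw [integral_inv_smul_withDensity_exp μ (by fun_prop), hnorm, Complex.real_smul,
    Complex.ofReal_inv, ← integral_const_mul, ← integral_const_mul]
  refine integral_congr_ae (ae_of_all _ fun x => ?_)
  have hexp : Complex.exp (h * x) * Complex.exp (z * (x - s)) =
      Complex.exp (-(z * s)) * Complex.exp ((z + h) * x) := by
    rw [← Complex.exp_add, ← Complex.exp_add]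
    ring_nf
  simp only [Complex.real_smul, hcast]
  linear_combination ((∫ x, Real.exp (h * x) ∂μ : ℝ) : ℂ)⁻¹ * hexp

lemma tilted_laplace_mul_gaussian_eq (μ : Measure ℝ) (h t : ℝ) (z : ℂ) :
    (∫ x : ℝ, Complex.exp (z * ((x : ℂ) - t * h)) ∂((ENNReal.ofReal (∫ x, Real.exp (h * x) ∂μ))⁻¹ •
        μ.withDensity (fun x => ENNReal.ofReal (Real.exp (h * x))))) *
        Complex.exp (-(t : ℂ) * z ^ 2 / 2) =
      (∫ x : ℝ, Complex.exp ((z + h) * x) ∂μ) * Complex.exp (-(t : ℂ) * (z + h) ^ 2 / 2) *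
        ((∫ x : ℝ, Complex.exp (h * x) ∂μ) * Complex.exp (-(t : ℂ) * (h : ℂ) ^ 2 / 2))⁻¹ := by
  rw [integral_cexp_mul_sub_tilted, mul_inv, ← Complex.exp_neg]
  have hexp : Complex.exp (-(z * (t * h))) * Complex.exp (-t * z ^ 2 / 2) =
      Complex.exp (-t * (z + h) ^ 2 / 2) * Complex.exp (-(-t * (h : ℂ) ^ 2 / 2)) := by
    rw [← Complex.exp_add, ← Complex.exp_add]
    ring_nf
  linear_combination (∫ x : ℝ, Complex.exp (h * x) ∂μ)⁻¹ *
    (∫ x : ℝ, Complex.exp ((z + h) * x) ∂μ) * hexp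

theorem mod_gaussian_tilting_general (a b : ℝ)
    (μ : ℕ → Measure ℝ)
    (t : ℕ → ℝ)
    (Ψ : ℂ → ℂ)
    (hΨhol : DifferentiableOn ℂ Ψ {z : ℂ | a < z.re ∧ z.re < b})
    (hconv : TendstoLocallyUniformlyOn
      (fun N z => (∫ x : ℝ, Complex.exp (z * x) ∂(μ N)) * Complex.exp (-(t N : ℂ) * z ^ 2 / 2))
      Ψ atTop {z : ℂ | a < z.re ∧ z.re < b})
    (h : ℝ) (hha : a < h) (hhb : h < b) (hΨh : Ψ (h : ℂ) ≠ 0)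
    (ν : ℕ → Measure ℝ)
    (hν : ∀ N, ν N = (ENNReal.ofReal (∫ x : ℝ, Real.exp (h * x) ∂(μ N)))⁻¹ •
      (μ N).withDensity (fun x => ENNReal.ofReal (Real.exp (h * x)))) :
    TendstoLocallyUniformlyOn
      (fun N z => (∫ x : ℝ, Complex.exp (z * ((x : ℂ) - t N * h)) ∂(ν N))
        * Complex.exp (-(t N : ℂ) * z ^ 2 / 2))
      (fun z => Ψ (z + h) / Ψ (h : ℂ)) atTop
      {z : ℂ | a - h < z.re ∧ z.re < b - h} := by
  set S : Set ℂ := {z : ℂ | a < z.re ∧ z.re < b}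
  set T : Set ℂ := {z : ℂ | a - h < z.re ∧ z.re < b - h}
  have hshift : Set.MapsTo (· + (h : ℂ)) T S := fun z hz => by
    simp only [S, T, Set.mem_ofPred_eq, Complex.add_re, Complex.ofReal_re] at hz ⊢
    constructor <;> linarith [hz.1, hz.2]
  have hhS : (h : ℂ) ∈ S := ⟨by simpa using hha, by simpa using hhb⟩
  have hnum := hconv.comp (· + (h : ℂ)) hshift (by fun_prop)
  have hden := ((hconv.tendsto_at hhS).inv₀ hΨh).tendstoUniformlyOn_const T
  simp_rw [hν, tilted_laplace_mul_gaussian_eq, div_eq_mul_inv]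
  exact hnum.fun_mul₀ hden.tendstoLocallyUniformlyOn
    (hΨhol.continuousOn.comp (by fun_prop) hshift) continuousOn_const

/-- Mod-Gaussian convergence and exponential tilting of measures (Lemma 1.4):
if `(X_N)` (with laws `μ N`) converges in the mod-Gaussian sense on the strip
`{a < Re z < b}` with parameters `t N` and limit `Ψ`, and `h ∈ (a,b)` is real with
`Ψ(h) ≠ 0`, then the tilted and recentered sequence `X_{N,h} - t_N h` (with laws `ν N`)
converges in the mod-Gaussian sense on `{a - h < Re z < b - h}` with limit
`z ↦ Ψ(z+h)/Ψ(h)`. -/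
theorem mod_gaussian_tilting (a b : ℝ) (ha : a < 0) (hb : 0 < b)
    (μ : ℕ → Measure ℝ) (hprob : ∀ N, IsProbabilityMeasure (μ N))
    (t : ℕ → ℝ) (ht : Tendsto t atTop atTop)
    (hint : ∀ N, ∀ z : ℂ, a < z.re → z.re < b →
      Integrable (fun x : ℝ => Complex.exp (z * x)) (μ N))
    (hhol : ∀ N, DifferentiableOn ℂ (fun z => ∫ x : ℝ, Complex.exp (z * x) ∂(μ N))
      {z : ℂ | a < z.re ∧ z.re < b})
    (Ψ : ℂ → ℂ)
    (hΨhol : DifferentiableOn ℂ Ψ {z : ℂ | a < z.re ∧ z.re < b})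
    (hΨ0 : Ψ 0 = 1)
    (hconv : TendstoLocallyUniformlyOn
      (fun N z => (∫ x : ℝ, Complex.exp (z * x) ∂(μ N)) * Complex.exp (-(t N : ℂ) * z ^ 2 / 2))
      Ψ atTop {z : ℂ | a < z.re ∧ z.re < b})
    (h : ℝ) (hha : a < h) (hhb : h < b) (hΨh : Ψ (h : ℂ) ≠ 0)
    (ν : ℕ → Measure ℝ)
    (hν : ∀ N, ν N = (ENNReal.ofReal (∫ x : ℝ, Real.exp (h * x) ∂(μ N)))⁻¹ •
      (μ N).withDensity (fun x => ENNReal.ofReal (Real.exp (h * x)))) :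
    TendstoLocallyUniformlyOn
      (fun N z => (∫ x : ℝ, Complex.exp (z * ((x : ℂ) - t N * h)) ∂(ν N))
        * Complex.exp (-(t N : ℂ) * z ^ 2 / 2))
      (fun z => Ψ (z + h) / Ψ (h : ℂ)) atTop
      {z : ℂ | a - h < z.re ∧ z.re < b - h} :=
  mod_gaussian_tilting_general a b μ t Ψ hΨhol hconv h hha hhb hΨh ν hν
end

section
/- For every β>0, every integer N≥1 and every real z>0: Λ_{N,β}(z) = β'·Λ_{N,2}(z/β') + ((β'−1)/2)·(2·ℓ(N+z/(2β')) − ℓ(N) − ℓ(N+z/β')) + m(z) − ((β'+1)/2)·m(z/β') + ∫₀^∞ ((1−e^{−sβ'(N−1)})/(1−e^{−sβ'}))·(1−e^{−sz/2})²·e^{−sβ'}·φ_β(s) ds. -/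
open MeasureTheory Filter

noncomputable section

namespace CbetaE

/-- The "free energy": real part of the log-characteristic polynomial at 1. -/
def XN (N : ℕ) (θ : Fin N → ℝ) : ℝ :=
  Real.log ‖∏ i, (1 - Complex.exp (θ i * Complex.I))‖

/-- Unnormalized density of the circular Jacobi `(β, δ)` ensemble. -/
def jacobiDensity (β δ : ℝ) (N : ℕ) (θ : Fin N → ℝ) : ℝ :=
  (∏ p ∈ Finset.univ.filter (fun p : Fin N × Fin N => p.1 < p.2),
      ‖Complex.exp (θ p.1 * Complex.I) - Complex.exp (θ p.2 * Complex.I)‖ ^ β)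
  * ∏ i, ‖1 - Complex.exp (θ i * Complex.I)‖ ^ (2 * δ)

/-- Unnormalized circular Jacobi `(β, δ)` measure on `[0, 2π)^N`. -/
def jacobiRaw (β δ : ℝ) (N : ℕ) : Measure (Fin N → ℝ) :=
  ((volume : Measure (Fin N → ℝ)).restrict
      {θ | ∀ i, θ i ∈ Set.Ico (0 : ℝ) (2 * Real.pi)}).withDensity
    fun θ => ENNReal.ofReal (jacobiDensity β δ N θ)

/-- The circular Jacobi `(β, δ)` ensemble: normalized probability measure. -/
def jacobi (β δ : ℝ) (N : ℕ) : Measure (Fin N → ℝ) :=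
  (jacobiRaw β δ N Set.univ)⁻¹ • jacobiRaw β δ N

/-- The circular `β` ensemble `ℙ_β` of order `N`. -/
def cbe (β : ℝ) (N : ℕ) : Measure (Fin N → ℝ) := jacobi β 0 N

/-- `ℙ_β[X_N ≥ x]`. -/
def tailP (β : ℝ) (N : ℕ) (x : ℝ) : ℝ := (cbe β N {θ | x ≤ XN N θ}).toReal

/-- Log-Laplace transform `Λ_{N,β}(z)` of `X_N` under `ℙ_β` (real argument `z > -1`). -/
def Lam (β : ℝ) (N : ℕ) (z : ℝ) : ℝ :=
  ∑ k ∈ Finset.range N,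
    (Real.log (Real.Gamma (β / 2 * k + 1)) + Real.log (Real.Gamma (β / 2 * k + 1 + z))
      - 2 * Real.log (Real.Gamma (β / 2 * k + 1 + z / 2)))

/-- Legendre–Fenchel transform `Λ*_{N,β}(x) = sup_{h > -1} (x h - Λ_{N,β}(h))`. -/
def LamStar (β : ℝ) (N : ℕ) (x : ℝ) : ℝ :=
  sSup ((fun h => x * h - Lam β N h) '' Set.Ioi (-1 : ℝ))

/-- `θ(x) = (1+2x) log(1+2x) - (1+x) log(1+x) - x log(4x)`. -/
def thetaFn (x : ℝ) : ℝ :=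
  (1 + 2 * x) * Real.log (1 + 2 * x) - (1 + x) * Real.log (1 + x) - x * Real.log (4 * x)

/-- Inverse of `θ` on `[0, ∞)`. -/
def thetaInv : ℝ → ℝ := Function.invFunOn thetaFn (Set.Ici 0)

/-- The modified function `θ_{N,β}`. -/
def thetaN (β : ℝ) (N : ℕ) (x : ℝ) : ℝ :=
  thetaFn x + ((β / 2 - 1) / (2 * (β / 2) * N)) *
    (Real.log 2 + Real.log (1 + x) - Real.log (1 + 2 * x))

/-- Inverse of `θ_{N,β}` on `[0, ∞)`. -/
def thetaNInv (β : ℝ) (N : ℕ) : ℝ → ℝ := Function.invFunOn (thetaN β N) (Set.Ici 0)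

/-- `φ(s) = (1/s)(1/2 - 1/s + 1/(e^s - 1))`. -/
def phiFn (s : ℝ) : ℝ := (1 / s) * (1 / 2 - 1 / s + 1 / (Real.exp s - 1))

/-- `φ_β(s) = φ(s) - β'² φ(sβ')`. -/
def phiB (β s : ℝ) : ℝ := phiFn s - (β / 2) ^ 2 * phiFn (s * (β / 2))

/-- `η_β(s)`; equal to `0` when `β = 2`. -/
def etaB (β s : ℝ) : ℝ :=
  if β = 2 then 0
  else s * (β / 2) * phiB β s / ((Real.exp (s * (β / 2)) - 1) * ((1 - (β / 2) ^ 2) / 12))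

/-- `ζ'(-1)`, the derivative of the Riemann zeta function at `-1` (a real number). -/
def zetaD : ℝ := (deriv riemannZeta (-1)).re

/-- The constant `A_β`. -/
def Abeta (β : ℝ) : ℝ :=
  (∫ s in Set.Ioi (0 : ℝ), (1 - Real.exp (-(s / 2))) ^ 2 * etaB β s / s)
  + ∫ t in Set.Ioi (1 : ℝ), ∫ s in Set.Ioi (0 : ℝ),
      ((2 * Real.exp (-(s * t / 2)) - Real.exp (-(s * t))) / t) * deriv (etaB β) s

/-- The constant `C_β`. -/
def Cbeta (β : ℝ) : ℝ :=
  ((2 : ℝ) ^ (1 / (12 * (β / 2))) * Real.pi ^ ((β / 2 - 3) / 4) / β) *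
    Real.exp ((1 - (β / 2) ^ 2) / (12 * (β / 2)) * (Abeta β + Real.log (β / 2))
      + (β / 2) * zetaD)

/-- The Barnes `G`-function (real argument), via its Weierstrass product. -/
def barnesG (x : ℝ) : ℝ :=
  Real.exp (((x - 1) * (Real.log (2 * Real.pi) - 1)
      - (x - 1) ^ 2 * (Real.eulerMascheroniConstant + 1)) / 2) *
    ∏' k : ℕ, ((1 + (x - 1) / (k + 1)) ^ (k + 1)
      * Real.exp (-(x - 1) + (x - 1) ^ 2 / (2 * (k + 1))))

/-- `Ψ(z) = G(1 + z/2)² / G(1 + z)`. -/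
def PsiFn (z : ℝ) : ℝ := barnesG (1 + z / 2) ^ 2 / barnesG (1 + z)

/-- `m(z) = log Γ(1+z) - 2 log Γ(1+z/2)`. -/
def mFn (z : ℝ) : ℝ := Real.log (Real.Gamma (1 + z)) - 2 * Real.log (Real.Gamma (1 + z / 2))

/-- The function `f(N, β, ϑ)` from Theorem 1.11 (iii). -/
def fLD (β : ℝ) (N : ℕ) (v : ℝ) : ℝ :=
  (β / 2) * ((N : ℝ) * v) ^ 2 * Real.log (1 + 1 / (4 * v * (1 + v)))
    + (((N : ℝ) ^ 2 * (β / 2) - (N : ℝ) * ((β / 2) - 1)) / 2) * Real.log (1 + v ^ 2 / (1 + 2 * v))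

/-- The rate function `I(x)`. -/
def Ifun (x : ℝ) : ℝ :=
  -((1 - 4 * x ^ 2) / 2) * Real.log (1 + 2 * x) - x ^ 2 * Real.log (4 * x)
    + (1 - x ^ 2) * Real.log (1 + x)

end CbetaE

/-!
`Λ_{N,β}(z)` is the sum over `k < N` of the second differences `Δ_z g (β'k)`, with step `z/2`,
of `g t = log Γ(t + 1) = (t + 1/2) log t + R t`. Under the scaling `t ↦ β't`, `z ↦ β'z` the
elementary part changes by
`Δ_{β'w}((t + 1/2) log t)(β'k) = β' Δ_w((t + 1/2) log t)(k) - (β' - 1)/2 · Δ_w log k`,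
and the sum over `k` of `Δ_w log k` telescopes to the `log Γ` terms at `N`. The remainder `R` is
Binet's function up to an affine term, so `Δ_z R x = ∫₀^∞ e^{-sx} (1 - e^{-sz/2})² φ(s) ds`;
summing over `k`, the factors `e^{-sβ'k}` form the geometric series of the integrand, and the
rescaled copy contributes `β'² φ(sβ')`.

Binet's formula in this second-difference form follows from
`φ(s) = 1/(2s) - 1/s² + 1/(s(e^s - 1))`: the first two terms give Frullani integrals, and
expanding `1/(e^s - 1)` geometrically turns the third into Gauss's product for `Γ`.
-/

namespace CbetaE

open Real Set

def secondDiff (f : ℝ → ℝ) (z x : ℝ) : ℝ := f x + f (x + z) - 2 * f (x + z / 2)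

lemma secondDiff_log_nonpos {z x : ℝ} (hx : 0 < x) (hz : 0 ≤ z) : secondDiff log z x ≤ 0 := by
  have hmul : x * (x + z) ≤ (x + z / 2) ^ 2 := by nlinarith
  have hlog := log_le_log (by positivity : 0 < x * (x + z)) hmul
  rw [log_mul hx.ne' (by positivity), log_pow, Nat.cast_ofNat] at hlog
  unfold secondDiff
  linarith

lemma secondDiff_logGamma_add_one {z x : ℝ} (hx : 0 < x) (hz : 0 ≤ z) :
    secondDiff (fun t => log (Gamma t)) z (x + 1)
      = secondDiff (fun t => log (Gamma t)) z x + secondDiff log z x := by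
  have hxz : 0 < x + z := by positivity
  have hxz2 : 0 < x + z / 2 := by positivity
  simp only [secondDiff]
  rw [add_right_comm x 1, add_right_comm x 1, Gamma_add_one hx.ne', Gamma_add_one hxz.ne',
    Gamma_add_one hxz2.ne', log_mul hx.ne' (Gamma_pos_of_pos hx).ne',
    log_mul hxz.ne' (Gamma_pos_of_pos hxz).ne', log_mul hxz2.ne' (Gamma_pos_of_pos hxz2).ne']
  ring

lemma secondDiff_logGamma_one (z : ℝ) : secondDiff (fun t => log (Gamma t)) z 1 = mFn z := by
  simp [secondDiff, mFn]

lemma sum_range_secondDiff_log {z x : ℝ} (hx : 0 < x) (hz : 0 ≤ z) (n : ℕ) :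
    ∑ j ∈ Finset.range n, secondDiff log z (x + j)
      = secondDiff (fun t => log (Gamma t)) z (x + n)
        - secondDiff (fun t => log (Gamma t)) z x := by
  have h := Finset.sum_range_sub (fun j : ℕ => secondDiff (fun t => log (Gamma t)) z (x + j)) n
  rw [Nat.cast_zero, add_zero] at h
  rw [← h]
  refine Finset.sum_congr rfl fun j _ => ?_
  rw [Nat.cast_succ, ← add_assoc, secondDiff_logGamma_add_one (by positivity) hz]
  ring

/-- The terms `x log n` and `log n!` of Gauss's product for `log Γ` drop out of second
differences. -/
lemma secondDiff_logGammaSeq (z x : ℝ) (n : ℕ) :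
    secondDiff (fun t => BohrMollerup.logGammaSeq t n) z x
      = ∑ m ∈ Finset.range (n + 1), -secondDiff log z (x + m) := by
  have hterm (m : ℕ) : -secondDiff log z (x + m)
      = 2 * log (x + z / 2 + m) - log (x + m) - log (x + z + m) := by
    simp only [secondDiff, add_right_comm _ (m : ℝ)]
    ring
  rw [Finset.sum_congr rfl fun m _ => hterm m, Finset.sum_sub_distrib, Finset.sum_sub_distrib,
    ← Finset.mul_sum]
  simp only [secondDiff, BohrMollerup.logGammaSeq]
  ring

lemma hasSum_neg_secondDiff_log {z x : ℝ} (hx : 0 < x) (hz : 0 ≤ z) :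
    HasSum (fun n : ℕ => -secondDiff log z (x + n)) (secondDiff (fun t => log (Gamma t)) z x) := by
  rw [hasSum_iff_tendsto_nat_of_nonneg fun n =>
    neg_nonneg.2 (secondDiff_log_nonpos (by positivity) hz)]
  refine (tendsto_add_atTop_iff_nat 1).mp ?_
  simp only [← secondDiff_logGammaSeq]
  exact ((BohrMollerup.tendsto_log_gamma hx).add
    (BohrMollerup.tendsto_log_gamma (by positivity))).sub
    ((BohrMollerup.tendsto_log_gamma (by positivity)).const_mul 2)

lemma exp_neg_mul_add (s a b : ℝ) : exp (-(s * (a + b))) = exp (-(s * a)) * exp (-(s * b)) := by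
  rw [← exp_add]; ring_nf

lemma secondDiff_exp_neg_mul (s z x : ℝ) :
    secondDiff (fun t => exp (-(s * t))) z x = exp (-(s * x)) * (1 - exp (-(s * (z / 2)))) ^ 2 := by
  have h : x + z = x + z / 2 + z / 2 := by ring
  simp only [secondDiff, h, exp_neg_mul_add]
  ring

lemma one_sub_exp_neg_le {u : ℝ} : 1 - exp (-u) ≤ u := by
  linarith [add_one_le_exp (-u)]

section Frullani

variable {g : ℝ → ℝ} {C p q : ℝ}

lemma integral_Ioc_exp_neg_mul {s : ℝ} (hs : s ≠ 0) (hpq : p ≤ q) :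
    ∫ t in Ioc p q, exp (-(s * t)) = (exp (-(s * p)) - exp (-(s * q))) / s := by
  have hderiv (t : ℝ) : HasDerivAt (fun t => -exp (-(s * t)) / s) (exp (-(s * t))) t := by
    refine (((hasDerivAt_id t).const_mul s).neg.exp.neg.div_const s).congr_deriv ?_
    field_simp
    simp
  rw [← intervalIntegral.integral_of_le hpq, intervalIntegral.integral_eq_sub_of_hasDerivAt
    (fun t _ => hderiv t)
    ((by fun_prop : Continuous fun t => exp (-(s * t))).intervalIntegrable _ _)]
  ring

lemma integrable_prod_mul_exp_neg_mul (hg : Measurable g) (hgC : ∀ s ∈ Ioi 0, |g s| ≤ C)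
    (hp : 0 < p) :
    Integrable (fun u : ℝ × ℝ => g u.1 * exp (-(u.1 * u.2)))
      ((volume.restrict (Ioi 0)).prod (volume.restrict (Ioc p q))) := by
  have hdom : Integrable (fun u : ℝ × ℝ => C * exp (-p * u.1) * 1)
      ((volume.restrict (Ioi 0)).prod (volume.restrict (Ioc p q))) :=
    ((exp_neg_integrableOn_Ioi 0 hp).const_mul C).mul_prod (integrable_const 1)
  refine hdom.mono' (by fun_prop) ?_
  rw [Measure.prod_restrict]
  filter_upwards [ae_restrict_mem (measurableSet_Ioi.prod measurableSet_Ioc)] with u ⟨hs, ht⟩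
  have hs : 0 < u.1 := hs
  rw [norm_mul, norm_of_nonneg (exp_pos _).le, mul_one]
  exact mul_le_mul (hgC _ hs) (exp_le_exp.2 (by nlinarith [ht.1])) (exp_pos _).le
    ((abs_nonneg _).trans (hgC _ hs))

lemma eqOn_integral_Ioc_mul_exp_neg_mul (hpq : p ≤ q) :
    EqOn (fun s => ∫ t in Ioc p q, g s * exp (-(s * t)))
      (fun s => g s * ((exp (-(s * p)) - exp (-(s * q))) / s)) (Ioi 0) := fun s hs => by
  simp only [integral_const_mul, integral_Ioc_exp_neg_mul (ne_of_gt hs) hpq]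

lemma integrableOn_mul_exp_sub_exp_div (hg : Measurable g) (hgC : ∀ s ∈ Ioi 0, |g s| ≤ C)
    (hp : 0 < p) (hpq : p ≤ q) :
    IntegrableOn (fun s => g s * ((exp (-(s * p)) - exp (-(s * q))) / s)) (Ioi 0) :=
  IntegrableOn.congr_fun (integrable_prod_mul_exp_neg_mul hg hgC hp).integral_prod_left
    (eqOn_integral_Ioc_mul_exp_neg_mul hpq) measurableSet_Ioi

lemma integral_mul_exp_sub_exp_div (hg : Measurable g) (hgC : ∀ s ∈ Ioi 0, |g s| ≤ C)
    (hp : 0 < p) (hpq : p ≤ q) :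
    ∫ s in Ioi 0, g s * ((exp (-(s * p)) - exp (-(s * q))) / s)
      = ∫ t in Ioc p q, ∫ s in Ioi 0, g s * exp (-(s * t)) := by
  rw [← setIntegral_congr_fun measurableSet_Ioi (eqOn_integral_Ioc_mul_exp_neg_mul hpq)]
  exact integral_integral_swap (integrable_prod_mul_exp_neg_mul hg hgC hp)

lemma integral_Ioi_exp_neg_mul {t : ℝ} (ht : 0 < t) : ∫ s in Ioi 0, exp (-(s * t)) = 1 / t := by
  simpa [mul_comm, neg_mul] using integral_exp_mul_Ioi (neg_neg_iff_pos.2 ht) 0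

lemma integrableOn_exp_sub_exp_div (hp : 0 < p) (hpq : p ≤ q) :
    IntegrableOn (fun s => (exp (-(s * p)) - exp (-(s * q))) / s) (Ioi 0) := by
  simpa using integrableOn_mul_exp_sub_exp_div (g := 1) (C := 1) measurable_const
    (by simp) hp hpq

theorem integral_exp_sub_exp_div (hp : 0 < p) (hpq : p ≤ q) :
    ∫ s in Ioi 0, (exp (-(s * p)) - exp (-(s * q))) / s = log q - log p := by
  have hq : 0 < q := hp.trans_le hpq
  have h := integral_mul_exp_sub_exp_div (g := 1) (C := 1) measurable_const (by simp) hp hpq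
  simp only [Pi.one_apply, one_mul] at h
  rw [h, setIntegral_congr_fun measurableSet_Ioc fun t ht => integral_Ioi_exp_neg_mul
    (hp.trans ht.1), ← intervalIntegral.integral_of_le hpq, integral_one_div
    (notMem_uIcc_of_lt hp hq), log_div hq.ne' hp.ne']

end Frullani

/-- Binet's function `log Γ(t) - (t - 1/2) log t + t - log (2π) / 2`, up to an affine term, which
second differences do not see. -/
def binetRemainder (t : ℝ) : ℝ := log (Gamma (t + 1)) - (t + 1 / 2) * log t

section Binet

variable {z x : ℝ}

lemma secondDiff_exp_neg_mul_div_eq (s : ℝ) :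
    secondDiff (fun t => exp (-(s * t))) z x / s
      = (exp (-(s * x)) - exp (-(s * (x + z / 2)))) / s
        - (exp (-(s * (x + z / 2))) - exp (-(s * (x + z)))) / s := by
  simp only [secondDiff]
  ring

lemma integrableOn_secondDiff_exp_neg_mul_div (hx : 0 < x) (hz : 0 ≤ z) :
    IntegrableOn (fun s => secondDiff (fun t => exp (-(s * t))) z x / s) (Ioi 0) := by
  simp only [secondDiff_exp_neg_mul_div_eq]
  exact (integrableOn_exp_sub_exp_div hx (by linarith)).sub
    (integrableOn_exp_sub_exp_div (by positivity) (by linarith))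

lemma integral_secondDiff_exp_neg_mul_div (hx : 0 < x) (hz : 0 ≤ z) :
    ∫ s in Ioi 0, secondDiff (fun t => exp (-(s * t))) z x / s = -secondDiff log z x := by
  simp only [secondDiff_exp_neg_mul_div_eq]
  rw [integral_sub (integrableOn_exp_sub_exp_div hx (by linarith))
    (integrableOn_exp_sub_exp_div (by positivity) (by linarith)),
    integral_exp_sub_exp_div hx (by linarith),
    integral_exp_sub_exp_div (by positivity) (by linarith)]
  simp only [secondDiff]
  ring

lemma abs_one_sub_exp_neg_mul_div_le {s a : ℝ} (hs : 0 < s) (ha : 0 ≤ a) :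
    |(1 - exp (-(s * a))) / s| ≤ a := by
  have h₀ : 0 ≤ 1 - exp (-(s * a)) := by
    rw [sub_nonneg, exp_le_one_iff, neg_nonpos]; positivity
  rw [abs_of_nonneg (by positivity), div_le_iff₀ hs, mul_comm a]
  exact one_sub_exp_neg_le

lemma secondDiff_exp_neg_mul_div_sq_eq (s : ℝ) :
    secondDiff (fun t => exp (-(s * t))) z x / s ^ 2
      = (1 - exp (-(s * (z / 2)))) / s * ((exp (-(s * x)) - exp (-(s * (x + z / 2)))) / s) := by
  rw [secondDiff_exp_neg_mul, exp_neg_mul_add]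
  ring

lemma integrableOn_secondDiff_exp_neg_mul_div_sq (hx : 0 < x) (hz : 0 ≤ z) :
    IntegrableOn (fun s => secondDiff (fun t => exp (-(s * t))) z x / s ^ 2) (Ioi 0) := by
  simp only [secondDiff_exp_neg_mul_div_sq_eq]
  exact integrableOn_mul_exp_sub_exp_div (by fun_prop)
    (fun s hs => abs_one_sub_exp_neg_mul_div_le hs (by positivity)) hx (by linarith)

lemma integral_Ioc_log_add_sub_log (hz : 0 ≤ z) :
    ∫ t in Ioc x (x + z / 2), (log (t + z / 2) - log t) = secondDiff (fun t => t * log t) z x := by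
  have hshift : IntervalIntegrable (fun t => log (t + z / 2)) volume x (x + z / 2) := by
    simpa using (intervalIntegral.intervalIntegrable_log' (a := x + z / 2)
      (b := x + z / 2 + z / 2)).comp_add_right (z / 2)
  rw [← intervalIntegral.integral_of_le (by linarith), intervalIntegral.integral_sub hshift
    intervalIntegral.intervalIntegrable_log',
    intervalIntegral.integral_comp_add_right (fun t => log t),
    integral_log, integral_log]
  simp only [secondDiff]
  ring_nf

lemma integral_secondDiff_exp_neg_mul_div_sq (hx : 0 < x) (hz : 0 ≤ z) :
    ∫ s in Ioi 0, secondDiff (fun t => exp (-(s * t))) z x / s ^ 2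
      = secondDiff (fun t => t * log t) z x := by
  have hinner : ∀ t ∈ Ioc x (x + z / 2),
      ∫ s in Ioi 0, (1 - exp (-(s * (z / 2)))) / s * exp (-(s * t)) = log (t + z / 2) - log t := by
    intro t ht
    have ht₀ : 0 < t := hx.trans ht.1
    rw [← integral_exp_sub_exp_div ht₀ (by linarith)]
    congr 1 with s
    rw [exp_neg_mul_add]
    ring
  simp only [secondDiff_exp_neg_mul_div_sq_eq]
  rw [integral_mul_exp_sub_exp_div (by fun_prop)
    (fun s hs => abs_one_sub_exp_neg_mul_div_le hs (by positivity)) hx (by linarith),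
    setIntegral_congr_fun measurableSet_Ioc hinner, integral_Ioc_log_add_sub_log hz]

lemma secondDiff_exp_neg_mul_nonneg (s z x : ℝ) : 0 ≤ secondDiff (fun t => exp (-(s * t))) z x := by
  rw [secondDiff_exp_neg_mul]; positivity

lemma hasSum_secondDiff_exp_neg_mul_div {s : ℝ} (hs : 0 < s) (z x : ℝ) :
    HasSum (fun n : ℕ => secondDiff (fun t => exp (-(s * t))) z (x + 1 + n) / s)
      (secondDiff (fun t => exp (-(s * t))) z x / (s * (exp s - 1))) := by
  have hr : exp (-s) < 1 := exp_lt_one_iff.2 (neg_neg_iff_pos.2 hs)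
  have hterm (n : ℕ) : secondDiff (fun t => exp (-(s * t))) z (x + 1 + n) / s
      = secondDiff (fun t => exp (-(s * t))) z x / s * exp (-s) * exp (-s) ^ n := by
    rw [secondDiff_exp_neg_mul, secondDiff_exp_neg_mul, exp_neg_mul_add, exp_neg_mul_add,
      ← exp_nat_mul]
    ring_nf
  have hsum : secondDiff (fun t => exp (-(s * t))) z x / s * exp (-s) * (1 - exp (-s))⁻¹
      = secondDiff (fun t => exp (-(s * t))) z x / (s * (exp s - 1)) := by
    have : exp s - 1 ≠ 0 := by linarith [add_one_lt_exp hs.ne']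
    rw [exp_neg]
    field_simp
  simpa only [hterm, hsum] using
    (hasSum_geometric_of_lt_one (exp_pos _).le hr).mul_left
      (secondDiff (fun t => exp (-(s * t))) z x / s * exp (-s))

lemma integrableOn_secondDiff_exp_neg_mul_div_mul_exp_sub_one (hx : 0 < x) (hz : 0 ≤ z) :
    IntegrableOn (fun s => secondDiff (fun t => exp (-(s * t))) z x / (s * (exp s - 1)))
      (Ioi 0) := by
  refine ((exp_neg_integrableOn_Ioi 0 hx).const_mul ((z / 2) ^ 2)).mono'
    (by simp only [secondDiff_exp_neg_mul]
        exact (by fun_prop : Measurable _).aestronglyMeasurable) ?_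
  filter_upwards [ae_restrict_mem measurableSet_Ioi] with s (hs : 0 < s)
  have hsq : s ^ 2 ≤ s * (exp s - 1) := by nlinarith [add_one_le_exp s]
  have hK : secondDiff (fun t => exp (-(s * t))) z x ≤ exp (-x * s) * (s * (z / 2)) ^ 2 := by
    rw [secondDiff_exp_neg_mul, neg_mul, mul_comm x]
    gcongr
    · rw [sub_nonneg, exp_le_one_iff, neg_nonpos]; positivity
    · exact one_sub_exp_neg_le
  rw [norm_of_nonneg (div_nonneg (secondDiff_exp_neg_mul_nonneg s z x) ((sq_nonneg s).trans hsq))]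
  calc secondDiff (fun t => exp (-(s * t))) z x / (s * (exp s - 1))
      ≤ secondDiff (fun t => exp (-(s * t))) z x / s ^ 2 :=
        div_le_div_of_nonneg_left (secondDiff_exp_neg_mul_nonneg s z x) (by positivity) hsq
    _ ≤ exp (-x * s) * (s * (z / 2)) ^ 2 / s ^ 2 := by gcongr
    _ = (z / 2) ^ 2 * exp (-x * s) := by field_simp

lemma integral_secondDiff_exp_neg_mul_div_mul_exp_sub_one (hx : 0 < x) (hz : 0 ≤ z) :
    ∫ s in Ioi 0, secondDiff (fun t => exp (-(s * t))) z x / (s * (exp s - 1))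
      = secondDiff (fun t => log (Gamma (t + 1))) z x := by
  have hint (n : ℕ) := integrableOn_secondDiff_exp_neg_mul_div (x := x + 1 + n) (by positivity) hz
  have hval (n : ℕ) := integral_secondDiff_exp_neg_mul_div (x := x + 1 + n) (by positivity) hz
  have hnorm (n : ℕ) : ∫ s in Ioi 0, ‖secondDiff (fun t => exp (-(s * t))) z (x + 1 + n) / s‖
      = -secondDiff log z (x + 1 + n) := by
    rw [← hval]
    refine setIntegral_congr_fun measurableSet_Ioi fun s (hs : 0 < s) => ?_
    exact norm_of_nonneg (div_nonneg (secondDiff_exp_neg_mul_nonneg s z _) hs.le)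
  have hlog := hasSum_neg_secondDiff_log (x := x + 1) (by positivity) hz
  have hsum := hasSum_integral_of_summable_integral_norm hint
    (by simpa only [hnorm] using hlog.summable)
  rw [setIntegral_congr_fun measurableSet_Ioi
    fun s (hs : 0 < s) => (hasSum_secondDiff_exp_neg_mul_div hs z x).tsum_eq] at hsum
  simp only [hval] at hsum
  rw [hsum.unique hlog]
  simp only [secondDiff, add_right_comm x 1]

lemma secondDiff_exp_neg_mul_mul_phiFn_eq (s : ℝ) :
    secondDiff (fun t => exp (-(s * t))) z x * phiFn s
      = secondDiff (fun t => exp (-(s * t))) z x / s / 2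
        - secondDiff (fun t => exp (-(s * t))) z x / s ^ 2
        + secondDiff (fun t => exp (-(s * t))) z x / (s * (exp s - 1)) := by
  unfold phiFn
  rw [← div_div]
  ring

lemma integrableOn_secondDiff_exp_neg_mul_mul_phiFn (hx : 0 < x) (hz : 0 ≤ z) :
    IntegrableOn (fun s => secondDiff (fun t => exp (-(s * t))) z x * phiFn s) (Ioi 0) := by
  simp only [secondDiff_exp_neg_mul_mul_phiFn_eq]
  exact (((integrableOn_secondDiff_exp_neg_mul_div hx hz).div_const 2).sub
    (integrableOn_secondDiff_exp_neg_mul_div_sq hx hz)).add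
    (integrableOn_secondDiff_exp_neg_mul_div_mul_exp_sub_one hx hz)

/-- Binet's formula `log Γ(t) = (t - 1/2) log t - t + log (2π) / 2 + ∫₀^∞ e^{-st} φ(s) ds`, under
a second difference. -/
theorem integral_secondDiff_exp_neg_mul_mul_phiFn (hx : 0 < x) (hz : 0 ≤ z) :
    ∫ s in Ioi 0, secondDiff (fun t => exp (-(s * t))) z x * phiFn s
      = secondDiff binetRemainder z x := by
  have h₁ := (integrableOn_secondDiff_exp_neg_mul_div hx hz).div_const 2
  have h₂ := integrableOn_secondDiff_exp_neg_mul_div_sq hx hz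
  have h₁₂ : IntegrableOn (fun s => secondDiff (fun t => exp (-(s * t))) z x / s / 2
      - secondDiff (fun t => exp (-(s * t))) z x / s ^ 2) (Ioi 0) := h₁.sub h₂
  simp only [secondDiff_exp_neg_mul_mul_phiFn_eq]
  rw [integral_add h₁₂ (integrableOn_secondDiff_exp_neg_mul_div_mul_exp_sub_one hx hz),
    integral_sub h₁ h₂, integral_div, integral_secondDiff_exp_neg_mul_div hx hz,
    integral_secondDiff_exp_neg_mul_div_sq hx hz,
    integral_secondDiff_exp_neg_mul_div_mul_exp_sub_one hx hz]
  simp only [secondDiff, binetRemainder]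
  ring

variable {b : ℝ}

lemma secondDiff_exp_neg_mul_mul_phiFn_mul_eq (s : ℝ) :
    secondDiff (fun t => exp (-(s * t))) (b * z) (b * x) * (b ^ 2 * phiFn (s * b))
      = b ^ 2 * (secondDiff (fun t => exp (-(s * b * t))) z x * phiFn (s * b)) := by
  simp only [secondDiff_exp_neg_mul]
  ring_nf

lemma integrableOn_secondDiff_exp_neg_mul_mul_phiFn_mul (hb : 0 < b) (hx : 0 < x) (hz : 0 ≤ z) :
    IntegrableOn (fun s => secondDiff (fun t => exp (-(s * t))) (b * z) (b * x)
      * (b ^ 2 * phiFn (s * b))) (Ioi 0) := by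
  simp only [secondDiff_exp_neg_mul_mul_phiFn_mul_eq]
  refine ((integrableOn_Ioi_comp_mul_right_iff
    (fun u => secondDiff (fun t => exp (-(u * t))) z x * phiFn u) 0 hb).2 ?_).const_mul _
  simpa using integrableOn_secondDiff_exp_neg_mul_mul_phiFn hx hz

theorem integral_secondDiff_exp_neg_mul_mul_phiFn_mul (hb : 0 < b) (hx : 0 < x) (hz : 0 ≤ z) :
    ∫ s in Ioi 0, secondDiff (fun t => exp (-(s * t))) (b * z) (b * x) * (b ^ 2 * phiFn (s * b))
      = b * secondDiff binetRemainder z x := by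
  simp only [secondDiff_exp_neg_mul_mul_phiFn_mul_eq]
  rw [integral_const_mul, integral_comp_mul_right_Ioi
    (fun u => secondDiff (fun t => exp (-(u * t))) z x * phiFn u) 0 hb, zero_mul,
    integral_secondDiff_exp_neg_mul_mul_phiFn hx hz, smul_eq_mul]
  field_simp

end Binet

lemma secondDiff_add_half_mul_log_mul {b z x : ℝ} (hb : 0 < b) (hx : 0 < x) (hz : 0 ≤ z) :
    secondDiff (fun t => (t + 1 / 2) * log t) (b * z) (b * x)
      = b * secondDiff (fun t => (t + 1 / 2) * log t) z x - (b - 1) / 2 * secondDiff log z x := by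
  have hxz : 0 < x + z := by positivity
  have hxz2 : 0 < x + z / 2 := by positivity
  simp only [secondDiff]
  rw [← mul_add, show b * z / 2 = b * (z / 2) by ring, ← mul_add, log_mul hb.ne' hx.ne',
    log_mul hb.ne' hxz.ne', log_mul hb.ne' hxz2.ne']
  ring

lemma Lam_succ (β : ℝ) (n : ℕ) (z : ℝ) :
    Lam β (n + 1) z
      = mFn z + ∑ j ∈ Finset.range n,
          secondDiff (fun t => log (Gamma (t + 1))) z (β / 2 * (j + 1)) := by
  rw [Lam, Finset.sum_range_succ', add_comm]
  congr 1
  · simp [mFn, add_comm]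
  · refine Finset.sum_congr rfl fun j _ => ?_
    simp only [secondDiff]
    push_cast
    ring_nf

lemma sum_secondDiff_logGamma_add_one_mul {b z : ℝ} (hb : 0 < b) (hz : 0 ≤ z) (n : ℕ) :
    ∑ j ∈ Finset.range n, secondDiff (fun t => log (Gamma (t + 1))) (b * z) (b * (j + 1))
      = b * ∑ j ∈ Finset.range n, secondDiff (fun t => log (Gamma (t + 1))) z (j + 1)
        + ∑ j ∈ Finset.range n, (secondDiff binetRemainder (b * z) (b * (j + 1))
            - b * secondDiff binetRemainder z (j + 1))
        - (b - 1) / 2 * (secondDiff (fun t => log (Gamma t)) z (n + 1) - mFn z) := by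
  have hsplit (w y : ℝ) : secondDiff (fun t => log (Gamma (t + 1))) w y
      = secondDiff binetRemainder w y + secondDiff (fun t => (t + 1 / 2) * log t) w y := by
    simp only [secondDiff, binetRemainder]
    ring
  have hterm (j : ℕ) : secondDiff (fun t => log (Gamma (t + 1))) (b * z) (b * (j + 1))
      = b * secondDiff (fun t => log (Gamma (t + 1))) z (j + 1)
        + (secondDiff binetRemainder (b * z) (b * (j + 1))
          - b * secondDiff binetRemainder z (j + 1))
        - (b - 1) / 2 * secondDiff log z (1 + j) := by
    rw [hsplit, hsplit, secondDiff_add_half_mul_log_mul hb (by positivity) hz, add_comm 1 (j : ℝ)]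
    ring
  rw [Finset.sum_congr rfl fun j _ => hterm j, Finset.sum_sub_distrib, Finset.sum_add_distrib,
    ← Finset.mul_sum, ← Finset.mul_sum, sum_range_secondDiff_log one_pos hz,
    secondDiff_logGamma_one, add_comm 1 (n : ℝ)]

lemma geom_mul_phiB_eq_sum {β s z : ℝ} (hβ : 0 < β) (hs : 0 < s) (n : ℕ) :
    (1 - exp (-(s * (β / 2) * n))) / (1 - exp (-(s * (β / 2)))) * (1 - exp (-(s * z / 2))) ^ 2
        * exp (-(s * (β / 2))) * phiB β s
      = ∑ j ∈ Finset.range n,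
          (secondDiff (fun t => exp (-(s * t))) z (β / 2 * (j + 1)) * phiFn s
            - secondDiff (fun t => exp (-(s * t))) z (β / 2 * (j + 1))
              * ((β / 2) ^ 2 * phiFn (s * (β / 2)))) := by
  set r := exp (-(s * (β / 2))) with hr_def
  have hr : r < 1 := exp_lt_one_iff.2 (by nlinarith)
  have hpow (k : ℕ) : exp (-(s * (β / 2) * k)) = r ^ k := by
    rw [hr_def, ← exp_nat_mul]; ring_nf
  have hterm (j : ℕ) : secondDiff (fun t => exp (-(s * t))) z (β / 2 * (j + 1))
      = r ^ (j + 1) * (1 - exp (-(s * z / 2))) ^ 2 := by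
    rw [secondDiff_exp_neg_mul, ← hpow (j + 1)]
    push_cast
    ring_nf
  have hgeom : ∑ j ∈ Finset.range n, r ^ (j + 1) = r * ((r ^ n - 1) / (r - 1)) := by
    simp only [pow_succ', ← Finset.mul_sum, geom_sum_eq hr.ne]
  rw [hpow]
  have hfactor : ∑ j ∈ Finset.range n, (r ^ (j + 1) * (1 - exp (-(s * z / 2))) ^ 2 * phiFn s
        - r ^ (j + 1) * (1 - exp (-(s * z / 2))) ^ 2 * ((β / 2) ^ 2 * phiFn (s * (β / 2))))
      = (∑ j ∈ Finset.range n, r ^ (j + 1))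
        * ((1 - exp (-(s * z / 2))) ^ 2 * (phiFn s - (β / 2) ^ 2 * phiFn (s * (β / 2)))) := by
    rw [Finset.sum_mul]
    exact Finset.sum_congr rfl fun j _ => by ring
  simp only [hterm]
  rw [hfactor, hgeom, phiB]
  have : r - 1 ≠ 0 := sub_ne_zero.2 hr.ne
  have : 1 - r ≠ 0 := sub_ne_zero.2 hr.ne'
  field_simp
  ring

theorem integral_geom_mul_phiB {β z : ℝ} (hβ : 0 < β) (hz : 0 ≤ z) (n : ℕ) :
    ∫ s in Ioi 0, (1 - exp (-(s * (β / 2) * n))) / (1 - exp (-(s * (β / 2))))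
        * (1 - exp (-(s * z / 2))) ^ 2 * exp (-(s * (β / 2))) * phiB β s
      = ∑ j ∈ Finset.range n, (secondDiff binetRemainder z (β / 2 * (j + 1))
          - β / 2 * secondDiff binetRemainder (z / (β / 2)) (j + 1)) := by
  have hb : 0 < β / 2 := by positivity
  have hint (j : ℕ) := integrableOn_secondDiff_exp_neg_mul_mul_phiFn
    (x := β / 2 * (j + 1)) (by positivity) hz
  have hz' : β / 2 * (z / (β / 2)) = z := mul_div_cancel₀ _ hb.ne'
  have hint' (j : ℕ) := integrableOn_secondDiff_exp_neg_mul_mul_phiFn_mul hb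
    (x := j + 1) (z := z / (β / 2)) (by positivity) (by positivity)
  have hval' (j : ℕ) := integral_secondDiff_exp_neg_mul_mul_phiFn_mul hb
    (x := j + 1) (z := z / (β / 2)) (by positivity) (by positivity)
  simp only [hz'] at hint' hval'
  rw [setIntegral_congr_fun measurableSet_Ioi fun s hs => geom_mul_phiB_eq_sum hβ hs n,
    integral_finsetSum]
  · refine Finset.sum_congr rfl fun j _ => ?_
    rw [integral_sub (hint j) (hint' j),
      integral_secondDiff_exp_neg_mul_mul_phiFn (by positivity) hz,
      hval']
  · exact fun j _ => (hint j).sub (hint' j)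

end CbetaE

open CbetaE in
/-- Comparison between Haar ensembles and circular `β` ensembles (Theorem 2.1). -/
theorem comparison_haar_cbe (β : ℝ) (hβ : 0 < β) (N : ℕ) (hN : 1 ≤ N)
    (z : ℝ) (hz : 0 < z) :
    Lam β N z = (β / 2) * Lam 2 N (z / (β / 2))
      + ((β / 2 - 1) / 2) *
          (2 * Real.log (Real.Gamma ((N : ℝ) + z / (2 * (β / 2))))
            - Real.log (Real.Gamma (N : ℝ))
            - Real.log (Real.Gamma ((N : ℝ) + z / (β / 2))))
      + mFn z - ((β / 2 + 1) / 2) * mFn (z / (β / 2))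
      + ∫ s in Set.Ioi (0 : ℝ),
          ((1 - Real.exp (-(s * (β / 2) * ((N : ℝ) - 1))))
              / (1 - Real.exp (-(s * (β / 2)))))
            * (1 - Real.exp (-(s * z / 2))) ^ 2 * Real.exp (-(s * (β / 2))) * phiB β s := by
  obtain ⟨n, rfl⟩ : ∃ n, N = n + 1 := ⟨N - 1, by omega⟩
  have hb : 0 < β / 2 := by positivity
  have hw : 0 ≤ z / (β / 2) := by positivity
  have hscale := sum_secondDiff_logGamma_add_one_mul hb hw n
  rw [mul_div_cancel₀ _ hb.ne'] at hscale
  have hhalf : z / (2 * (β / 2)) = z / (β / 2) / 2 := by ring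
  rw [Lam_succ, Lam_succ, hscale, Nat.cast_succ, add_sub_cancel_right,
    integral_geom_mul_phiB hβ hz.le n, hhalf]
  norm_num [secondDiff]
  ring
end
end

section
/- There exists an absolute constant C such that for all integers N≥1 and all real δ>0: (i) |Λ'_{N,2}(2δ) − [δ·log(N/(4δ)) + N·((1+2δ/N)·log(1+2δ/N) − (1+δ/N)·log(1+δ/N)) + (1/12)·(1/(N+δ) − 1/(2δ) − 1/(N+2δ))]| ≤ C/δ³, and (ii) |Λ''_{N,2}(2δ) − [(1/2)·log(N/(4δ)) + log(1+2δ/N) − (1/2)·log(1+δ/N) + (1/12)·(1/(N+2δ)² − 1/(2(N+δ)²) + 1/(4δ²))]| ≤ C/δ⁴. -/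
open MeasureTheory Filter

noncomputable section

/-! For `β = 2` the `k`-th summand of `Λ'_{N,2}(z)` is `ψ(k + 1 + z) - ψ(k + 1 + z/2)`, where
`ψ = (log Γ)'`. The recurrence `ψ(x + 1) = ψ(x) + 1/x` collapses these sums by summation by parts,
`∑_{k<N} ψ(k + 1 + a) = (N + a) ψ(N + a) - a ψ(a) - N`, and likewise for `ψ'`, so that
`Λ'_{N,2}(2δ)` and `Λ''_{N,2}(2δ)` are combinations of `ψ` and `ψ'` at `δ, 2δ, N + δ, N + 2δ`.
The main terms then come from the Stirling expansions
`ψ(x) = log x - 1/(2x) - 1/(12x²) + O(x⁻⁴)` and `ψ'(x) = 1/x + 1/(2x²) + 1/(6x³) + O(x⁻⁵)`,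
which hold uniformly in `x > 0`: the one-step errors of the recurrences are dominated by the
increments of `x⁻⁴` and `x⁻⁵/30`, so they telescope.

We work with `ψ(x) = -γ + ∑ₙ (1/(n + 1) - 1/(n + x))`, which can be differentiated termwise; it
equals `(log Γ)'` because both are monotone solutions of the recurrence with the value `-γ` at `1`.
-/

open Topology Set Real

lemma abs_le_of_tendsto_zero_of_abs_sub_succ_le {u v : ℕ → ℝ} (hu : Tendsto u atTop (𝓝 0))
    (hv : ∀ n, 0 ≤ v n) (huv : ∀ n, |u n - u (n + 1)| ≤ v n - v (n + 1)) : |u 0| ≤ v 0 := by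
  have hpartial : ∀ m, |u 0 - u m| ≤ v 0 - v m := by
    intro m
    induction m with
    | zero => simp
    | succ m ih => linarith [abs_sub_le (u 0) (u m) (u (m + 1)), huv m]
  have hbound : ∀ m, |u 0| ≤ v 0 + |u m| := fun m => by
    linarith [abs_sub_abs_le_abs_sub (u 0) (u m), hpartial m, hv m]
  simpa using ge_of_tendsto' (tendsto_const_nhds.add hu.abs) hbound

lemma eqOn_Ioi_of_monotoneOn_of_add_one {f g : ℝ → ℝ} (hf : MonotoneOn f (Ioi 0))
    (hg : MonotoneOn g (Ioi 0)) (hf1 : ∀ x, 0 < x → f (x + 1) = f x + 1 / x)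
    (hg1 : ∀ x, 0 < x → g (x + 1) = g x + 1 / x) (h1 : f 1 = g 1) : EqOn f g (Ioi 0) := by
  intro x hx
  have hx : 0 < x := hx
  have hnat : ∀ n : ℕ, f (n + 1) = g (n + 1) := by
    intro n
    induction n with
    | zero => simpa using h1
    | succ n ih =>
      push_cast
      rw [hf1 _ (by positivity), hg1 _ (by positivity), ih]
  have hshift : ∀ m : ℕ, f (x + m) - g (x + m) = f x - g x := by
    intro m
    induction m with
    | zero => simp
    | succ m ih =>
      push_cast
      rw [← add_assoc, hf1 _ (by positivity), hg1 _ (by positivity)]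
      linarith
  -- `f - g` is 1-periodic, and on `[n, n + 1]` both `f` and `g` increase by `1 / n` only.
  have hbound : ∀ m : ℕ, |f x - g x| ≤ 1 / ((m : ℝ) + 1) := by
    intro m
    set n : ℝ := ⌊x⌋₊ + m + 1 with hn_def
    have hmn : (m : ℝ) + 1 ≤ n := by linarith [Nat.cast_nonneg (α := ℝ) ⌊x⌋₊]
    have hn : 0 < n := by positivity
    have hlo : n ≤ x + (m + 1 : ℕ) := by push_cast; linarith [Nat.floor_le hx.le]
    have hhi : x + (m + 1 : ℕ) ≤ n + 1 := by push_cast; linarith [Nat.lt_floor_add_one x]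
    have hy : x + (m + 1 : ℕ) ∈ Ioi (0 : ℝ) := mem_Ioi.2 (hn.trans_le hlo)
    have hn1 : n + 1 ∈ Ioi (0 : ℝ) := mem_Ioi.2 (by positivity)
    have hfn : f n = g n := by simpa [hn_def] using hnat (⌊x⌋₊ + m)
    have hf_lo := hf hn hy hlo
    have hf_hi := hf hy hn1 hhi
    have hg_lo := hg hn hy hlo
    have hg_hi := hg hy hn1 hhi
    rw [hf1 n hn] at hf_hi
    rw [hg1 n hn] at hg_hi
    have hinv : 1 / n ≤ 1 / ((m : ℝ) + 1) := one_div_le_one_div_of_le (by positivity) hmn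
    rw [← hshift (m + 1), abs_le]
    constructor <;> linarith
  exact sub_eq_zero.1 <| abs_nonpos_iff.1 <|
    ge_of_tendsto' tendsto_one_div_add_atTop_nhds_zero_nat hbound

lemma summable_one_div_nat_add_sq (x : ℝ) : Summable fun n : ℕ => 1 / ((n : ℝ) + x) ^ 2 := by
  simpa [Real.rpow_two, sq_abs] using (summable_one_div_nat_add_rpow x 2).2 one_lt_two

lemma summable_one_div_nat_add_one_sub_one_div_nat_add {x : ℝ} (hx : 0 < x) :
    Summable fun n : ℕ => 1 / ((n : ℝ) + 1) - 1 / (n + x) := by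
  refine .of_norm_bounded (((summable_one_div_nat_add_sq 1).add
    (summable_one_div_nat_add_sq x)).mul_left |x - 1|) fun n => ?_
  have hn : (0 : ℝ) < n + 1 := by positivity
  have hnx : (0 : ℝ) < n + x := by positivity
  have hprod : 1 / ((n : ℝ) + 1) - 1 / (n + x) = (x - 1) * (1 / (n + 1) * (1 / (n + x))) := by
    field_simp
    ring
  rw [hprod, norm_mul, Real.norm_eq_abs, Real.norm_of_nonneg (by positivity), ← one_div_pow,
    ← one_div_pow]
  gcongr
  nlinarith [sq_nonneg (1 / ((n : ℝ) + 1) - 1 / (n + x))]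

lemma hasSum_one_div_nat_add_sub_one_div_nat_add_one {a : ℝ} (ha : 0 < a) :
    HasSum (fun n : ℕ => 1 / ((n : ℝ) + a) - 1 / (n + a + 1)) (1 / a) := by
  rw [hasSum_iff_tendsto_nat_of_nonneg fun n => sub_nonneg.2 <|
    one_div_le_one_div_of_le (by positivity) (by linarith)]
  have hpartial : ∀ m : ℕ, ∑ n ∈ Finset.range m, (1 / ((n : ℝ) + a) - 1 / (n + a + 1))
      = 1 / a - 1 / (m + a) := fun m => by
    simpa [add_right_comm] using Finset.sum_range_sub' (fun n : ℕ => 1 / ((n : ℝ) + a)) m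
  simp only [hpartial]
  simpa using tendsto_const_nhds.sub (tendsto_const_nhds (x := (1 : ℝ)).div_atTop
    (tendsto_atTop_add_const_right _ a tendsto_natCast_atTop_atTop))

def digammaSeries (x : ℝ) : ℝ :=
  -eulerMascheroniConstant + ∑' n : ℕ, (1 / ((n : ℝ) + 1) - 1 / (n + x))

def trigammaSeries (x : ℝ) : ℝ := ∑' n : ℕ, 1 / ((n : ℝ) + x) ^ 2

lemma digammaSeries_one : digammaSeries 1 = -eulerMascheroniConstant := by
  simp [digammaSeries]

lemma digammaSeries_add_one {x : ℝ} (hx : 0 < x) :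
    digammaSeries (x + 1) = digammaSeries x + 1 / x := by
  have hsub := (summable_one_div_nat_add_one_sub_one_div_nat_add (x := x + 1)
    (by linarith)).tsum_sub (summable_one_div_nat_add_one_sub_one_div_nat_add hx)
  have hterm : ∀ n : ℕ, (1 / ((n : ℝ) + 1) - 1 / (n + (x + 1))) - (1 / ((n : ℝ) + 1) - 1 / (n + x))
      = 1 / ((n : ℝ) + x) - 1 / (n + x + 1) := fun n => by ring_nf
  rw [tsum_congr hterm, (hasSum_one_div_nat_add_sub_one_div_nat_add_one hx).tsum_eq] at hsub
  simp only [digammaSeries]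
  linarith

lemma digammaSeries_nat_add_one (m : ℕ) :
    digammaSeries (m + 1) = -eulerMascheroniConstant + harmonic m := by
  induction m with
  | zero => simpa using digammaSeries_one
  | succ m ih =>
    push_cast
    rw [digammaSeries_add_one (by positivity), ih, harmonic_succ]
    push_cast
    ring

lemma trigammaSeries_eq_one_div_sq_add (x : ℝ) :
    trigammaSeries x = 1 / x ^ 2 + trigammaSeries (x + 1) := by
  rw [trigammaSeries, (summable_one_div_nat_add_sq x).tsum_eq_zero_add, trigammaSeries]
  push_cast
  simp only [zero_add, add_right_comm _ (1 : ℝ), add_assoc]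

lemma monotoneOn_digammaSeries : MonotoneOn digammaSeries (Ioi 0) := fun x hx y _ hxy => by
  have hx : 0 < x := hx
  have hy : 0 < y := hx.trans_le hxy
  refine add_le_add_right (Summable.tsum_le_tsum (fun n => ?_)
    (summable_one_div_nat_add_one_sub_one_div_nat_add hx)
    (summable_one_div_nat_add_one_sub_one_div_nat_add hy)) _
  have : 1 / ((n : ℝ) + y) ≤ 1 / (n + x) := one_div_le_one_div_of_le (by positivity) (by linarith)
  linarith

lemma hasDerivAt_digammaSeries {x : ℝ} (hx : 0 < x) :
    HasDerivAt digammaSeries (trigammaSeries x) x := by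
  have hderiv : ∀ (n : ℕ) (y : ℝ), y ∈ Ioi (x / 2) → HasDerivAt
      (fun z => 1 / ((n : ℝ) + 1) - 1 / (n + z)) (1 / ((n : ℝ) + y) ^ 2) y := by
    intro n y hy
    have hny : (n : ℝ) + y ≠ 0 := by have : 0 < y := (half_pos hx).trans hy; positivity
    have h := (((hasDerivAt_id' y).const_add (n : ℝ)).inv hny).const_sub (1 / ((n : ℝ) + 1))
    simp only [neg_div, neg_neg, Pi.inv_apply, one_div] at h ⊢
    exact h
  have hbound : ∀ (n : ℕ) (y : ℝ), y ∈ Ioi (x / 2) →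
      ‖1 / ((n : ℝ) + y) ^ 2‖ ≤ 1 / ((n : ℝ) + x / 2) ^ 2 := by
    intro n y hy
    have : x / 2 < y := hy
    rw [Real.norm_of_nonneg (by positivity)]
    gcongr
  exact (hasDerivAt_tsum_of_isPreconnected (summable_one_div_nat_add_sq (x / 2)) isOpen_Ioi
    isPreconnected_Ioi hderiv hbound (mem_Ioi.2 (half_lt_self hx))
    (summable_one_div_nat_add_one_sub_one_div_nat_add hx)
    (mem_Ioi.2 (half_lt_self hx))).const_add _

lemma hasDerivAt_log_Gamma {x : ℝ} (hx : 0 < x) :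
    HasDerivAt (fun y => log (Gamma y)) (digammaSeries x) x := by
  have hdiff : ∀ y ∈ Ioi (0 : ℝ), DifferentiableAt ℝ (log ∘ Gamma) y := fun y hy =>
    (differentiableAt_Gamma fun m => by linarith [hy.out, Nat.cast_nonneg (α := ℝ) m]).log
      (Gamma_pos_of_pos hy).ne'
  have hrec : ∀ y, 0 < y → deriv (log ∘ Gamma) (y + 1) = deriv (log ∘ Gamma) y + 1 / y := by
    intro y hy
    have h := (hasDerivAt_log hy.ne').add (hdiff y hy).hasDerivAt
    have heq : (fun z => (log ∘ Gamma) (z + 1)) =ᶠ[𝓝 y] fun z => log z + (log ∘ Gamma) z := by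
      filter_upwards [eventually_gt_nhds hy] with z hz
      simp [Gamma_add_one hz.ne', log_mul hz.ne' (Gamma_pos_of_pos hz).ne']
    rw [← deriv_comp_add_const, (h.congr_of_eventuallyEq heq).deriv, one_div, add_comm]
  have hone : deriv (log ∘ Gamma) 1 = -eulerMascheroniConstant := by
    simpa [Function.comp_def] using (hasDerivAt_Gamma_one.log (by simp)).deriv
  have heq := eqOn_Ioi_of_monotoneOn_of_add_one (convexOn_log_Gamma.monotoneOn_deriv hdiff)
    monotoneOn_digammaSeries hrec (fun y hy => digammaSeries_add_one hy)
    (hone.trans digammaSeries_one.symm) hx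
  exact heq ▸ (hdiff x hx).hasDerivAt

lemma tendsto_trigammaSeries_add_nat (x : ℝ) :
    Tendsto (fun m : ℕ => trigammaSeries (x + m)) atTop (𝓝 0) := by
  refine (tendsto_sum_nat_add fun n : ℕ => 1 / ((n : ℝ) + x) ^ 2).congr fun m => ?_
  simp only [trigammaSeries, Nat.cast_add, add_assoc, add_comm x]

lemma tendsto_digammaSeries_add_nat_sub_digammaSeries_nat_add_one {x : ℝ} (hx : 0 < x) :
    Tendsto (fun m : ℕ => digammaSeries (x + m) - digammaSeries (m + 1)) atTop (𝓝 0) := by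
  refine (tendsto_sum_nat_add fun n : ℕ => 1 / ((n : ℝ) + 1) - 1 / (n + x)).congr fun m => ?_
  rw [digammaSeries, digammaSeries, add_sub_add_left_eq_sub,
    ← (summable_one_div_nat_add_one_sub_one_div_nat_add (by positivity)).tsum_sub
      (summable_one_div_nat_add_one_sub_one_div_nat_add (by positivity))]
  congr 1 with n
  push_cast
  ring

lemma tendsto_digammaSeries_add_nat_sub_log {x : ℝ} (hx : 0 < x) :
    Tendsto (fun m : ℕ => digammaSeries (x + m) - log (x + m)) atTop (𝓝 0) := by
  have hlog : Tendsto (fun m : ℕ => log ((m : ℝ) + 1) - log (m + x)) atTop (𝓝 0) := by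
    simpa [Function.comp_def] using ((tendsto_log_comp_add_sub_log 1).sub
      (tendsto_log_comp_add_sub_log x)).comp tendsto_natCast_atTop_atTop
  have hharm : Tendsto (fun m : ℕ => digammaSeries (m + 1) - log (m + 1)) atTop (𝓝 0) := by
    rw [← sub_self eulerMascheroniConstant]
    refine (tendsto_harmonic_sub_log_add_one.sub_const eulerMascheroniConstant).congr fun m => ?_
    rw [digammaSeries_nat_add_one]
    ring
  simpa [add_comm x] using
    ((tendsto_digammaSeries_add_nat_sub_digammaSeries_nat_add_one hx).add hharm).add hlog

def digammaApprox (x : ℝ) : ℝ := log x - 1 / (2 * x) - 1 / (12 * x ^ 2)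

def trigammaApprox (x : ℝ) : ℝ := 1 / x + 1 / (2 * x ^ 2) + 1 / (6 * x ^ 3)

lemma abs_one_div_sub_digammaApprox_add_one_sub_le {y : ℝ} (hy : 0 < y) :
    |1 / y - (digammaApprox (y + 1) - digammaApprox y)| ≤ 1 / y ^ 4 - 1 / (y + 1) ^ 4 := by
  -- `(1 + s) / (1 - s) = 1 + 1 / y`, so the partial sums of the series of
  -- `artanh s = log (1 + 1 / y) / 2` bound the logarithm from both sides.
  set s := 1 / (2 * y + 1) with hs
  have hs0 : 0 ≤ s := by positivity
  have hs1 : s < 1 := by rw [hs, div_lt_one (by positivity)]; linarith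
  have hlog : log ((1 + s) / (1 - s)) = log (y + 1) - log y := by
    rw [← log_div (by positivity) hy.ne', hs]
    congr 1
    field_simp
    ring
  have hrem : s ^ 5 / (1 - s ^ 2) = 1 / (4 * y * (y + 1) * (2 * y + 1) ^ 3) := by
    have h1s : 1 - s ^ 2 = 4 * y * (y + 1) / (2 * y + 1) ^ 2 := by
      rw [hs]
      field_simp
      ring
    rw [h1s, hs]
    field_simp
  have hlow := sum_range_le_log_div hs0 hs1 3
  have hupp := log_div_le_sum_range_add hs0 hs1 2
  simp only [Finset.sum_range_succ, Finset.sum_range_zero] at hlow hupp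
  norm_num at hlow hupp
  rw [hlog] at hlow hupp
  rw [hrem] at hupp
  have hstep : 1 / y - (digammaApprox (y + 1) - digammaApprox y) = 1 / (2 * y) + 1 / (2 * (y + 1))
      + 1 / (12 * (y + 1) ^ 2) - 1 / (12 * y ^ 2) - (log (y + 1) - log y) := by
    simp only [digammaApprox]
    field_simp
    ring
  -- After clearing denominators, all coefficients of the resulting polynomials have one sign.
  have hlower : 0 ≤ 1 / y ^ 4 - 1 / (y + 1) ^ 4 + (1 / (2 * y) + 1 / (2 * (y + 1))
      + 1 / (12 * (y + 1) ^ 2) - 1 / (12 * y ^ 2)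
      - 2 * (s + s ^ 3 / 3 + 1 / (4 * y * (y + 1) * (2 * y + 1) ^ 3))) := by
    rw [hs]
    field_simp
    ring_nf
    positivity
  have hupper : 1 / (2 * y) + 1 / (2 * (y + 1)) + 1 / (12 * (y + 1) ^ 2) - 1 / (12 * y ^ 2)
      - 2 * (s + s ^ 3 / 3 + s ^ 5 / 5) ≤ 0 := by
    rw [hs]
    field_simp
    ring_nf
    linarith [pow_pos hy 2, pow_pos hy 3, pow_pos hy 4]
  have hdiff : 0 ≤ 1 / y ^ 4 - 1 / (y + 1) ^ 4 :=
    sub_nonneg.2 (one_div_le_one_div_of_le (by positivity) (by gcongr; linarith))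
  rw [hstep, abs_le]
  constructor <;> linarith

lemma abs_one_div_sq_sub_trigammaApprox_sub_le {y : ℝ} (hy : 0 < y) :
    |1 / y ^ 2 - (trigammaApprox y - trigammaApprox (y + 1))|
      ≤ 1 / (30 * y ^ 5) - 1 / (30 * (y + 1) ^ 5) := by
  have hexact : 1 / y ^ 2 - (trigammaApprox y - trigammaApprox (y + 1))
      = -(1 / (6 * y ^ 3 * (y + 1) ^ 3)) := by
    simp only [trigammaApprox]
    field_simp
    ring
  rw [hexact, abs_neg, abs_of_pos (by positivity), ← sub_nonneg]
  field_simp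
  ring_nf
  positivity

lemma abs_digammaSeries_sub_digammaApprox_le {x : ℝ} (hx : 0 < x) :
    |digammaSeries x - digammaApprox x| ≤ 1 / x ^ 4 := by
  have hinv : Tendsto (fun y : ℝ => y⁻¹) atTop (𝓝 0) := tendsto_inv_atTop_zero
  have hcorr : Tendsto (fun y : ℝ => 1 / (2 * y) + 1 / (12 * y ^ 2)) atTop (𝓝 0) := by
    simpa using ((hinv.const_mul (1 / 2)).add ((hinv.pow 2).const_mul (1 / 12))).congr
      fun y => by ring
  have hlim : Tendsto (fun m : ℕ => digammaSeries (x + m) - digammaApprox (x + m)) atTop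
      (𝓝 0) := by
    simpa using ((tendsto_digammaSeries_add_nat_sub_log hx).add (hcorr.comp
      (tendsto_atTop_add_const_left _ x tendsto_natCast_atTop_atTop))).congr fun m => by
        simp only [digammaApprox, Function.comp]
        ring
  have key := abs_le_of_tendsto_zero_of_abs_sub_succ_le (v := fun m => 1 / (x + m) ^ 4) hlim
    (fun m => by positivity) fun m => by
      have hy : 0 < x + m := by positivity
      have hstep := abs_one_div_sub_digammaApprox_add_one_sub_le hy
      rw [← abs_neg] at hstep
      push_cast
      rw [← add_assoc, digammaSeries_add_one hy]
      convert hstep using 2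
      ring
  simpa using key

lemma abs_trigammaSeries_sub_trigammaApprox_le {x : ℝ} (hx : 0 < x) :
    |trigammaSeries x - trigammaApprox x| ≤ 1 / (30 * x ^ 5) := by
  have hinv : Tendsto (fun y : ℝ => y⁻¹) atTop (𝓝 0) := tendsto_inv_atTop_zero
  have happrox : Tendsto trigammaApprox atTop (𝓝 0) := by
    simpa using ((hinv.add ((hinv.pow 2).const_mul (1 / 2))).add
      ((hinv.pow 3).const_mul (1 / 6))).congr fun y => by simp only [trigammaApprox]; ring
  have hlim : Tendsto (fun m : ℕ => trigammaSeries (x + m) - trigammaApprox (x + m)) atTop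
      (𝓝 0) := by
    simpa using (tendsto_trigammaSeries_add_nat x).sub
      (happrox.comp (tendsto_atTop_add_const_left _ x tendsto_natCast_atTop_atTop))
  have key := abs_le_of_tendsto_zero_of_abs_sub_succ_le (v := fun m => 1 / (30 * (x + m) ^ 5))
    hlim (fun m => by positivity) fun m => by
      have hy : 0 < x + m := by positivity
      have hstep := abs_one_div_sq_sub_trigammaApprox_sub_le hy
      push_cast
      rw [← add_assoc, trigammaSeries_eq_one_div_sq_add (x + m)]
      convert hstep using 2
      ring
  simpa using key

lemma abs_mul_digammaSeries_sub_mul_digammaApprox_le {δ y : ℝ} (hδ : 0 < δ) (hy : δ ≤ y) :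
    |y * digammaSeries y - y * digammaApprox y| ≤ 1 / δ ^ 3 := by
  have hy0 : 0 < y := hδ.trans_le hy
  calc |y * digammaSeries y - y * digammaApprox y|
      = y * |digammaSeries y - digammaApprox y| := by rw [← mul_sub, abs_mul, abs_of_pos hy0]
    _ ≤ y * (1 / y ^ 4) := by gcongr; exact abs_digammaSeries_sub_digammaApprox_le hy0
    _ = 1 / y ^ 3 := by field_simp
    _ ≤ 1 / δ ^ 3 := by gcongr

lemma abs_digammaSeries_add_mul_trigammaSeries_sub_le {δ y : ℝ} (hδ : 0 < δ) (hy : δ ≤ y) :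
    |(digammaSeries y + y * trigammaSeries y) - (digammaApprox y + y * trigammaApprox y)|
      ≤ 2 / δ ^ 4 := by
  have hy0 : 0 < y := hδ.trans_le hy
  calc |(digammaSeries y + y * trigammaSeries y) - (digammaApprox y + y * trigammaApprox y)|
      ≤ |digammaSeries y - digammaApprox y| + y * |trigammaSeries y - trigammaApprox y| := by
        rw [add_sub_add_comm, ← mul_sub, ← abs_of_pos hy0, ← abs_mul, abs_of_pos hy0]
        exact abs_add_le _ _
    _ ≤ 1 / y ^ 4 + y * (1 / (30 * y ^ 5)) := by
        gcongr
        · exact abs_digammaSeries_sub_digammaApprox_le hy0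
        · exact abs_trigammaSeries_sub_trigammaApprox_le hy0
    _ ≤ 2 / y ^ 4 := by
        rw [← sub_nonneg]
        field_simp
        norm_num
    _ ≤ 2 / δ ^ 4 := by gcongr

lemma sum_range_digammaSeries_nat_add_one_add {a : ℝ} (ha : 0 < a) (N : ℕ) :
    ∑ k ∈ Finset.range N, digammaSeries (k + 1 + a)
      = (N + a) * digammaSeries (N + a) - a * digammaSeries a - N := by
  induction N with
  | zero => simp
  | succ N ih =>
    have hNa : (0 : ℝ) < N + a := by positivity
    rw [Finset.sum_range_succ, ih]
    push_cast
    rw [add_right_comm (N : ℝ) 1 a, digammaSeries_add_one hNa]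
    field_simp
    ring

lemma sum_range_trigammaSeries_nat_add_one_add {a : ℝ} (ha : 0 < a) (N : ℕ) :
    ∑ k ∈ Finset.range N, trigammaSeries (k + 1 + a)
      = digammaSeries (N + a) + (N + a) * trigammaSeries (N + a)
        - digammaSeries a - a * trigammaSeries a := by
  induction N with
  | zero => simp
  | succ N ih =>
    have hNa : (0 : ℝ) < N + a := by positivity
    rw [Finset.sum_range_succ, ih]
    push_cast
    rw [add_right_comm (N : ℝ) 1 a, digammaSeries_add_one hNa,
      trigammaSeries_eq_one_div_sq_add (N + a)]
    field_simp
    ring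

lemma log_one_add_div {n a : ℝ} (hn : 0 < n) (ha : 0 < n + a) :
    log (1 + a / n) = log (n + a) - log n := by
  rw [← log_div ha.ne' hn.ne', add_div, div_self hn.ne']

lemma mean_main_term_eq {n δ : ℝ} (hn : 0 < n) (hδ : 0 < δ) :
    (n + 2 * δ) * digammaApprox (n + 2 * δ) - 2 * δ * digammaApprox (2 * δ)
        - ((n + δ) * digammaApprox (n + δ) - δ * digammaApprox δ)
      = δ * log (n / (4 * δ))
        + n * ((1 + 2 * δ / n) * log (1 + 2 * δ / n) - (1 + δ / n) * log (1 + δ / n))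
        + 1 / 12 * (1 / (n + δ) - 1 / (2 * δ) - 1 / (n + 2 * δ)) := by
  rw [log_one_add_div hn (by positivity), log_one_add_div hn (by positivity),
    log_div hn.ne' (by positivity), log_mul four_ne_zero hδ.ne', log_four_eq]
  simp only [digammaApprox, log_mul two_ne_zero hδ.ne']
  field_simp
  ring

lemma variance_main_term_eq {n δ : ℝ} (hn : 0 < n) (hδ : 0 < δ) :
    (digammaApprox (n + 2 * δ) + (n + 2 * δ) * trigammaApprox (n + 2 * δ)
        - digammaApprox (2 * δ) - 2 * δ * trigammaApprox (2 * δ))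
      - (digammaApprox (n + δ) + (n + δ) * trigammaApprox (n + δ)
        - digammaApprox δ - δ * trigammaApprox δ) / 2
      = 1 / 2 * log (n / (4 * δ)) + (log (1 + 2 * δ / n) - 1 / 2 * log (1 + δ / n))
        + 1 / 12 * (1 / (n + 2 * δ) ^ 2 - 1 / (2 * (n + δ) ^ 2) + 1 / (4 * δ ^ 2)) := by
  rw [log_one_add_div hn (by positivity), log_one_add_div hn (by positivity),
    log_div hn.ne' (by positivity), log_mul four_ne_zero hδ.ne', log_four_eq]
  simp only [digammaApprox, trigammaApprox, log_mul two_ne_zero hδ.ne']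
  field_simp
  ring
namespace CbetaE

lemma hasDerivAt_Lam {β : ℝ} (hβ : 0 ≤ β) (N : ℕ) {z : ℝ} (hz : -1 < z) :
    HasDerivAt (Lam β N) (∑ k ∈ Finset.range N,
      (digammaSeries (β / 2 * k + 1 + z) - digammaSeries (β / 2 * k + 1 + z / 2))) z := by
  refine HasDerivAt.fun_sum fun k _ => ?_
  have hk : 0 ≤ β / 2 * k := by positivity
  have h1 := (hasDerivAt_log_Gamma (x := β / 2 * k + 1 + z) (by linarith)).comp_const_add
    (β / 2 * k + 1) z
  have h2 := (hasDerivAt_log_Gamma (x := β / 2 * k + 1 + z / 2) (by linarith)).comp z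
    (((hasDerivAt_id' z).div_const 2).const_add (β / 2 * k + 1))
  exact ((h1.const_add _).sub (h2.const_mul 2)).congr_deriv (by ring)

lemma hasDerivAt_deriv_Lam {β : ℝ} (hβ : 0 ≤ β) (N : ℕ) {z : ℝ} (hz : -1 < z) :
    HasDerivAt (deriv (Lam β N)) (∑ k ∈ Finset.range N,
      (trigammaSeries (β / 2 * k + 1 + z) - trigammaSeries (β / 2 * k + 1 + z / 2) / 2)) z := by
  have hderiv : deriv (Lam β N) =ᶠ[𝓝 z] fun w => ∑ k ∈ Finset.range N,
      (digammaSeries (β / 2 * k + 1 + w) - digammaSeries (β / 2 * k + 1 + w / 2)) := by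
    filter_upwards [eventually_gt_nhds hz] with w hw using (hasDerivAt_Lam hβ N hw).deriv
  refine HasDerivAt.congr_of_eventuallyEq (HasDerivAt.fun_sum fun k _ => ?_) hderiv
  have hk : 0 ≤ β / 2 * k := by positivity
  have h1 := (hasDerivAt_digammaSeries (x := β / 2 * k + 1 + z) (by linarith)).comp_const_add
    (β / 2 * k + 1) z
  have h2 := (hasDerivAt_digammaSeries (x := β / 2 * k + 1 + z / 2) (by linarith)).comp z
    (((hasDerivAt_id' z).div_const 2).const_add (β / 2 * k + 1))
  exact (h1.sub h2).congr_deriv (by ring)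

lemma deriv_Lam_two_two_mul {δ : ℝ} (hδ : 0 < δ) (N : ℕ) :
    deriv (Lam 2 N) (2 * δ)
      = (N + 2 * δ) * digammaSeries (N + 2 * δ) - 2 * δ * digammaSeries (2 * δ)
        - ((N + δ) * digammaSeries (N + δ) - δ * digammaSeries δ) := by
  rw [(hasDerivAt_Lam zero_le_two N (by linarith)).deriv, Finset.sum_sub_distrib]
  simp only [div_self (two_ne_zero (α := ℝ)), one_mul, mul_div_cancel_left₀ δ two_ne_zero]
  rw [sum_range_digammaSeries_nat_add_one_add (by positivity),
    sum_range_digammaSeries_nat_add_one_add hδ]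
  ring

lemma deriv_deriv_Lam_two_two_mul {δ : ℝ} (hδ : 0 < δ) (N : ℕ) :
    deriv (deriv (Lam 2 N)) (2 * δ)
      = (digammaSeries (N + 2 * δ) + (N + 2 * δ) * trigammaSeries (N + 2 * δ)
          - digammaSeries (2 * δ) - 2 * δ * trigammaSeries (2 * δ))
        - (digammaSeries (N + δ) + (N + δ) * trigammaSeries (N + δ)
          - digammaSeries δ - δ * trigammaSeries δ) / 2 := by
  rw [(hasDerivAt_deriv_Lam zero_le_two N (by linarith)).deriv, Finset.sum_sub_distrib,
    ← Finset.sum_div]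
  simp only [div_self (two_ne_zero (α := ℝ)), one_mul, mul_div_cancel_left₀ δ two_ne_zero]
  rw [sum_range_trigammaSeries_nat_add_one_add (by positivity),
    sum_range_trigammaSeries_nat_add_one_add hδ]

end CbetaE

open CbetaE in
/-- Estimates of the mean and the variance under Hua–Pickrell measures, case `β = 2`
(Proposition 2.4): asymptotics of `Λ'_{N,2}(2δ)` and `Λ''_{N,2}(2δ)`. -/
theorem mean_variance_estimates_beta_two :
    ∃ C : ℝ, ∀ N : ℕ, 1 ≤ N → ∀ δ : ℝ, 0 < δ →
      |deriv (Lam 2 N) (2 * δ) -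
          (δ * Real.log ((N : ℝ) / (4 * δ))
            + (N : ℝ) * ((1 + 2 * δ / N) * Real.log (1 + 2 * δ / N)
                - (1 + δ / N) * Real.log (1 + δ / N))
            + 1 / 12 * (1 / ((N : ℝ) + δ) - 1 / (2 * δ) - 1 / ((N : ℝ) + 2 * δ)))|
        ≤ C / δ ^ 3 ∧
      |deriv (deriv (Lam 2 N)) (2 * δ) -
          (1 / 2 * Real.log ((N : ℝ) / (4 * δ))
            + (Real.log (1 + 2 * δ / N) - 1 / 2 * Real.log (1 + δ / N))
            + 1 / 12 * (1 / ((N : ℝ) + 2 * δ) ^ 2 - 1 / (2 * ((N : ℝ) + δ) ^ 2)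
                + 1 / (4 * δ ^ 2)))|
        ≤ C / δ ^ 4 := by
  refine ⟨6, fun N hN δ hδ => ?_⟩
  have hN : (0 : ℝ) < N := by exact_mod_cast hN
  have h2δ : δ ≤ 2 * δ := by linarith
  have hNδ : δ ≤ N + δ := by linarith
  have hN2δ : δ ≤ N + 2 * δ := by linarith
  rw [deriv_Lam_two_two_mul hδ, deriv_deriv_Lam_two_two_mul hδ, ← mean_main_term_eq hN hδ,
    ← variance_main_term_eq hN hδ, show (6 : ℝ) / δ ^ 3 = 6 * (1 / δ ^ 3) by ring,
    show (6 : ℝ) / δ ^ 4 = 3 * (2 / δ ^ 4) by ring]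
  have hpos : 0 < 1 / δ ^ 3 := by positivity
  have e₁ := abs_le.1 (abs_mul_digammaSeries_sub_mul_digammaApprox_le hδ hN2δ)
  have e₂ := abs_le.1 (abs_mul_digammaSeries_sub_mul_digammaApprox_le hδ h2δ)
  have e₃ := abs_le.1 (abs_mul_digammaSeries_sub_mul_digammaApprox_le hδ hNδ)
  have e₄ := abs_le.1 (abs_mul_digammaSeries_sub_mul_digammaApprox_le hδ le_rfl)
  have f₁ := abs_le.1 (abs_digammaSeries_add_mul_trigammaSeries_sub_le hδ hN2δ)
  have f₂ := abs_le.1 (abs_digammaSeries_add_mul_trigammaSeries_sub_le hδ h2δ)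
  have f₃ := abs_le.1 (abs_digammaSeries_add_mul_trigammaSeries_sub_le hδ hNδ)
  have f₄ := abs_le.1 (abs_digammaSeries_add_mul_trigammaSeries_sub_le hδ le_rfl)
  refine ⟨abs_le.2 ⟨?_, ?_⟩, abs_le.2 ⟨?_, ?_⟩⟩ <;> linarith
end
end

section
/- Fix β>0. Let (a_N)_{N≥1} be a sequence with 0 < a_N < N·log 2 for every N; let λ_N > 0 be defined by Λ'_{N,β}(β·λ_N) = a_N, and set v_N = Λ''_{N,β}(β·λ_N). Then the following three conditions are equivalent: (1) liminf_{N→∞} λ_N > 0 and v_N → +∞; (2) liminf_{N→∞} λ_N > 0 and λ_N/N → 0; (3) liminf_{N→∞} a_N/log N > 0 and a_N/N → 0. -/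
open MeasureTheory Filter

noncomputable section

/-!
Write `b = β / 2` and `h = β λ_N`. With `ψ` the digamma function,
`Λ'(h) = ∑_{k<N} (ψ(bk + 1 + h) - ψ(bk + 1 + h/2))` and
`Λ''(h) = ∑_{k<N} (ψ'(bk + 1 + h) - ψ'(bk + 1 + h/2) / 2)`.
The trigamma bounds `1/y ≤ ψ'(y) ≤ 1/y + 1/y²`, together with the mean value theorem for `ψ`,
turn both into harmonic sums `∑ 1/(bk + c)`, that is, into logarithms up to bounded errors:
* `Λ''(h)` is `log (1 + bN/(1 + h))` up to constant factors and additive constants, so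
  `v_N → ∞` iff `h = o(N)`;
* `N (h/2) / (bN + 1 + h) ≤ Λ'(h) ≲ √(hN) + 1`, so `a_N = o(N)` iff `h = o(N)`;
* `Λ'(h) ≥ (c/2b) log (1 + bN/(1 + c))` as soon as `h ≥ c`, while `Λ'(h) ≲ h log N + 1`, so
  `a_N ≳ log N` iff `h` stays bounded away from `0`.
-/

open Real Finset Topology

namespace CbetaE

def digamma : ℝ → ℝ := deriv (log ∘ Gamma)

/-- Defined by its series; `hasDerivAt_digamma` shows it is the derivative of `digamma` on
`(0, ∞)`. -/
def trigamma (x : ℝ) : ℝ := ∑' n : ℕ, 1 / (x + n) ^ 2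

section Digamma

variable {c x y z : ℝ}

lemma differentiableAt_log_Gamma (hx : 0 < x) : DifferentiableAt ℝ (log ∘ Gamma) x := by
  have hx' : ∀ m : ℕ, x ≠ -m := fun m hm => by linarith [Nat.cast_nonneg (α := ℝ) m]
  exact (differentiableAt_Gamma hx').log (Gamma_ne_zero hx')

lemma hasDerivAt_log_Gamma (hx : 0 < x) : HasDerivAt (log ∘ Gamma) (digamma x) x :=
  (differentiableAt_log_Gamma hx).hasDerivAt

lemma digamma_add_one (hx : 0 < x) : digamma (x + 1) = digamma x + 1 / x := by
  have hfeq :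
      (fun y => (log ∘ Gamma) (y + 1)) =ᶠ[𝓝 x] fun y => (log ∘ Gamma) y + log y := by
    filter_upwards [eventually_gt_nhds hx] with y hy
    simp only [Function.comp_apply]
    rw [Gamma_add_one hy.ne', log_mul hy.ne' (Gamma_pos_of_pos hy).ne', add_comm]
  rw [digamma, ← deriv_comp_add_const, hfeq.deriv_eq,
    ((differentiableAt_log_Gamma hx).hasDerivAt.fun_add (hasDerivAt_log hx.ne')).deriv, one_div]

lemma monotoneOn_digamma : MonotoneOn digamma (Set.Ioi 0) :=
  convexOn_log_Gamma.monotoneOn_deriv fun _ hx => differentiableAt_log_Gamma hx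

lemma digamma_le_digamma (hx : 0 < x) (hxy : x ≤ y) : digamma x ≤ digamma y :=
  monotoneOn_digamma hx (hx.trans_le hxy) hxy

lemma digamma_add_nat (hx : 0 < x) (m : ℕ) :
    digamma (x + m) = digamma x + ∑ n ∈ range m, 1 / (x + n) := by
  induction m with
  | zero => simp
  | succ m ih =>
    rw [Nat.cast_succ, ← add_assoc, digamma_add_one (by positivity), ih, sum_range_succ,
      add_assoc]

lemma hasSum_sub_succ_of_antitone {f : ℕ → ℝ} (hf : Antitone f)
    (hf0 : Tendsto f atTop (𝓝 0)) : HasSum (fun n => f n - f (n + 1)) (f 0) := by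
  rw [hasSum_iff_tendsto_nat_of_nonneg fun n => sub_nonneg.2 (hf n.le_succ)]
  simp_rw [sum_range_sub']
  simpa using tendsto_const_nhds.sub hf0

lemma tendsto_const_div_add_natCast (c d : ℝ) :
    Tendsto (fun n : ℕ => d / (c + n)) atTop (𝓝 0) :=
  tendsto_const_nhds.div_atTop (tendsto_atTop_add_const_left _ _ tendsto_natCast_atTop_atTop)

lemma hasSum_one_div_sub_one_div_add_one (hc : 0 < c) :
    HasSum (fun n : ℕ => 1 / (c + n) - 1 / (c + n + 1)) (1 / c) := by
  have hanti : Antitone fun n : ℕ => 1 / (c + n) := fun m n hmn =>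
    one_div_le_one_div_of_le (by positivity) (by gcongr)
  simpa [add_assoc] using hasSum_sub_succ_of_antitone hanti (tendsto_const_div_add_natCast c 1)

lemma hasSum_digamma_sub (hz : 0 < z) (hzy : z ≤ y) :
    HasSum (fun n : ℕ => 1 / (z + n) - 1 / (y + n)) (digamma y - digamma z) := by
  have hy : 0 < y := hz.trans_le hzy
  set g : ℕ → ℝ := fun n => digamma (y + n) - digamma (z + n)
  have hstep (n : ℕ) : g n - g (n + 1) = 1 / (z + n) - 1 / (y + n) := by
    have hsucc (x : ℝ) : x + ((n + 1 : ℕ) : ℝ) = x + n + 1 := by push_cast; ring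
    simp only [g, hsucc, digamma_add_one (by positivity : 0 < y + n),
      digamma_add_one (by positivity : 0 < z + n)]
    ring
  have hanti : Antitone g := antitone_nat_of_succ_le fun n => by
    have : 1 / (y + n) ≤ 1 / (z + n) := one_div_le_one_div_of_le (by positivity) (by linarith)
    linarith [hstep n]
  have hlim : Tendsto g atTop (𝓝 0) := by
    set K := ⌈y - z⌉₊
    refine squeeze_zero (fun n => sub_nonneg.2 <| digamma_le_digamma (by positivity)
      (by linarith)) (fun n => ?_) (tendsto_const_div_add_natCast z K)
    have hzn : 0 < z + n := by positivity
    calc g n ≤ digamma (z + n + K) - digamma (z + n) := by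
          have : y - z ≤ K := Nat.le_ceil _
          exact sub_le_sub_right (digamma_le_digamma (by positivity) (by linarith)) _
      _ = ∑ j ∈ range K, 1 / (z + n + j) := by rw [digamma_add_nat hzn]; ring
      _ ≤ ∑ _j ∈ range K, 1 / (z + n) :=
          sum_le_sum fun j _ => one_div_le_one_div_of_le hzn (by simp)
      _ = K / (z + n) := by rw [sum_const, card_range, nsmul_eq_mul, mul_one_div]
  have := hasSum_sub_succ_of_antitone hanti hlim
  simp only [hstep] at this
  simpa [g] using this

lemma one_div_sq_le_mul_sub {b c u : ℝ} (hb : 0 < b) (hc : 0 < c) (hcu : c ≤ u) :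
    1 / u ^ 2 ≤ (c + b) / (c * b) * (1 / u - 1 / (u + b)) := by
  have hu : 0 < u := hc.trans_le hcu
  rw [div_sub_div _ _ hu.ne' (by positivity), div_mul_div_comm, div_le_div_iff₀ (by positivity)
    (by positivity)]
  nlinarith [mul_le_mul_of_nonneg_left hcu (by positivity : (0 : ℝ) ≤ b * u * b)]

lemma one_div_sub_one_div_add_one_le (hy : 0 < y) : 1 / y - 1 / (y + 1) ≤ 1 / y ^ 2 := by
  rw [div_sub_div _ _ hy.ne' (by positivity), div_le_div_iff₀ (by positivity) (by positivity)]
  nlinarith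

lemma summable_one_div_add_sq (hy : 0 < y) : Summable fun n : ℕ => 1 / (y + n) ^ 2 :=
  .of_nonneg_of_le (fun n => by positivity)
    (fun n => one_div_sq_le_mul_sub one_pos hy (by simp))
    ((hasSum_one_div_sub_one_div_add_one hy).summable.mul_left _)

lemma trigamma_le (hy : 0 < y) : trigamma y ≤ 1 / y + 1 / y ^ 2 := by
  have := hasSum_le (fun n => one_div_sq_le_mul_sub one_pos hy (by simp))
    (summable_one_div_add_sq hy).hasSum ((hasSum_one_div_sub_one_div_add_one hy).mul_left _)
  calc trigamma y ≤ (y + 1) / (y * 1) * (1 / y) := this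
    _ = 1 / y + 1 / y ^ 2 := by field_simp

lemma one_div_le_trigamma (hy : 0 < y) : 1 / y ≤ trigamma y :=
  hasSum_le (fun n : ℕ => one_div_sub_one_div_add_one_le (by positivity : 0 < y + n))
    (hasSum_one_div_sub_one_div_add_one hy) (summable_one_div_add_sq hy).hasSum

lemma hasDerivAt_digamma (hy : 0 < y) : HasDerivAt digamma (trigamma y) y := by
  have hm : 0 < y / 2 := by positivity
  have hmy : y / 2 < y := by linarith
  have hterm (n : ℕ) (u : ℝ) (hu : u ∈ Set.Ioi (y / 2)) :
      HasDerivAt (fun u : ℝ => 1 / (y / 2 + n) - 1 / (u + n)) (1 / (u + n) ^ 2) u := by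
    have hun : u + n ≠ 0 := by
      have : y / 2 < u := hu
      linarith [Nat.cast_nonneg (α := ℝ) n]
    simpa only [id, one_div, neg_div, neg_neg] using
      (((hasDerivAt_id u).add_const (n : ℝ)).fun_inv hun).const_sub (1 / (y / 2 + n))
  have hbound (n : ℕ) (u : ℝ) (hu : u ∈ Set.Ioi (y / 2)) :
      ‖1 / (u + n) ^ 2‖ ≤ 1 / (y / 2 + n) ^ 2 := by
    have : y / 2 < u := hu
    rw [Real.norm_eq_abs, abs_of_nonneg (by positivity)]
    exact one_div_le_one_div_of_le (by positivity) (by gcongr)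
  have hseries :
      HasDerivAt (fun u => ∑' n : ℕ, (1 / (y / 2 + n) - 1 / (u + n))) (trigamma y) y :=
    hasDerivAt_tsum_of_isPreconnected (summable_one_div_add_sq hm) isOpen_Ioi
      (convex_Ioi _).isPreconnected hterm hbound hmy (hasSum_digamma_sub hm hmy.le).summable hmy
  refine (hseries.const_add (digamma (y / 2))).congr_of_eventuallyEq ?_
  filter_upwards [eventually_gt_nhds hmy] with u hu
  rw [(hasSum_digamma_sub hm hu.le).tsum_eq]
  ring

lemma exists_digamma_sub_eq (hz : 0 < z) (hzy : z < y) :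
    ∃ ξ ∈ Set.Ioo z y, digamma y - digamma z = (y - z) * trigamma ξ := by
  obtain ⟨ξ, hξ, heq⟩ := exists_hasDerivAt_eq_slope digamma trigamma hzy
    (fun u hu => (hasDerivAt_digamma (hz.trans_le hu.1)).continuousAt.continuousWithinAt)
    (fun u hu => hasDerivAt_digamma (hz.trans hu.1))
  exact ⟨ξ, hξ, by rw [heq]; field_simp [(sub_pos.2 hzy).ne']⟩

lemma div_le_digamma_sub (hz : 0 < z) (hzy : z < y) : (y - z) / y ≤ digamma y - digamma z := by
  obtain ⟨ξ, hξ, heq⟩ := exists_digamma_sub_eq hz hzy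
  rw [heq, div_eq_mul_one_div]
  gcongr
  calc 1 / y ≤ 1 / ξ := one_div_le_one_div_of_le (hz.trans hξ.1) hξ.2.le
    _ ≤ trigamma ξ := one_div_le_trigamma (hz.trans hξ.1)

lemma digamma_sub_le (hz : 0 < z) (hzy : z < y) :
    digamma y - digamma z ≤ (y - z) * (1 / z + 1 / z ^ 2) := by
  obtain ⟨ξ, hξ, heq⟩ := exists_digamma_sub_eq hz hzy
  rw [heq]
  refine mul_le_mul_of_nonneg_left ?_ (by linarith)
  calc trigamma ξ ≤ 1 / ξ + 1 / ξ ^ 2 := trigamma_le (hz.trans hξ.1)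
    _ ≤ 1 / z + 1 / z ^ 2 := by gcongr <;> exact hξ.1.le

lemma trigamma_nonneg (y : ℝ) : 0 ≤ trigamma y := tsum_nonneg fun n => by positivity

end Digamma

def dLam (b : ℝ) (N : ℕ) (z : ℝ) : ℝ :=
  ∑ k ∈ range N, (digamma (b * k + (1 + z)) - digamma (b * k + (1 + z / 2)))

def d2Lam (b : ℝ) (N : ℕ) (z : ℝ) : ℝ :=
  ∑ k ∈ range N, (trigamma (b * k + (1 + z)) - trigamma (b * k + (1 + z / 2)) / 2)

section Derivatives

variable {b β z : ℝ} {N : ℕ}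

lemma hasDerivAt_Lam_s17 (hβ : 0 ≤ β) (hz : -1 < z) :
    HasDerivAt (Lam β N) (dLam (β / 2) N z) z := by
  unfold Lam dLam
  refine HasDerivAt.fun_sum fun k _ => ?_
  have hk : 0 ≤ β / 2 * k := by positivity
  have h1 : HasDerivAt (fun w => log (Gamma (β / 2 * k + 1 + w)))
      (digamma (β / 2 * k + (1 + z)) * 1) z := by
    rw [← add_assoc]
    exact (hasDerivAt_log_Gamma (by linarith)).comp z ((hasDerivAt_id' z).const_add _)
  have h2 : HasDerivAt (fun w => log (Gamma (β / 2 * k + 1 + w / 2)))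
      (digamma (β / 2 * k + (1 + z / 2)) * (1 / 2)) z := by
    rw [← add_assoc]
    exact (hasDerivAt_log_Gamma (by linarith)).comp z (((hasDerivAt_id' z).div_const 2).const_add _)
  exact ((hasDerivAt_const z _).fun_add h1 |>.fun_sub (h2.const_mul 2)).congr_deriv (by ring)

lemma hasDerivAt_dLam (hb : 0 ≤ b) (hz : -1 < z) : HasDerivAt (dLam b N) (d2Lam b N z) z := by
  unfold dLam d2Lam
  refine HasDerivAt.fun_sum fun k _ => ?_
  have hk : 0 ≤ b * k := by positivity
  have h1 : HasDerivAt (fun w => digamma (b * k + (1 + w))) (trigamma (b * k + (1 + z)) * 1) z :=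
    (hasDerivAt_digamma (by linarith)).comp z (((hasDerivAt_id' z).const_add 1).const_add _)
  have h2 : HasDerivAt (fun w => digamma (b * k + (1 + w / 2)))
      (trigamma (b * k + (1 + z / 2)) * (1 / 2)) z :=
    (hasDerivAt_digamma (by linarith)).comp z
      ((((hasDerivAt_id' z).div_const 2).const_add 1).const_add _)
  exact (h1.fun_sub h2).congr_deriv (by ring)

lemma deriv_Lam (hβ : 0 ≤ β) (hz : -1 < z) : deriv (Lam β N) z = dLam (β / 2) N z :=
  (hasDerivAt_Lam_s17 hβ hz).deriv

lemma deriv_deriv_Lam (hβ : 0 ≤ β) (hz : -1 < z) :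
    deriv (deriv (Lam β N)) z = d2Lam (β / 2) N z := by
  have hderiv : deriv (Lam β N) =ᶠ[𝓝 z] dLam (β / 2) N := by
    filter_upwards [eventually_gt_nhds hz] with w hw using deriv_Lam hβ hw
  rw [hderiv.deriv_eq, (hasDerivAt_dLam (by positivity) hz).deriv]

end Derivatives

section HarmonicSums

variable {b c t u : ℝ} {N : ℕ}

lemma div_add_le_log_add_sub_log (hu : 0 < u) (hb : 0 ≤ b) :
    b / (u + b) ≤ log (u + b) - log u := by
  have h := one_sub_inv_le_log_of_pos (by positivity : 0 < (u + b) / u)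
  rwa [log_div (by positivity) hu.ne', inv_div, one_sub_div (by positivity),
    add_sub_cancel_left] at h

lemma log_add_sub_log_le_div (hu : 0 < u) (hb : 0 ≤ b) : log (u + b) - log u ≤ b / u := by
  have h := log_le_sub_one_of_pos (by positivity : 0 < (u + b) / u)
  rwa [log_div (by positivity) hu.ne', div_sub_one hu.ne', add_sub_cancel_left] at h

lemma sum_log_add_sub_log (hb : 0 ≤ b) (hc : 0 < c) (N : ℕ) :
    ∑ k ∈ range N, (log (b * k + c + b) - log (b * k + c)) = log (1 + b * N / c) := by
  have htel := sum_range_sub (fun k : ℕ => log (b * k + c)) N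
  simp only [Nat.cast_succ, Nat.cast_zero, mul_add, mul_one, mul_zero, zero_add,
    add_right_comm _ b c] at htel
  rw [htel, ← log_div (by positivity) hc.ne', add_div, div_self hc.ne', add_comm]

lemma log_one_add_div_le_sum (hb : 0 < b) (hc : 0 < c) :
    log (1 + b * N / c) / b ≤ ∑ k ∈ range N, 1 / (b * k + c) := by
  rw [← sum_log_add_sub_log hb.le hc, sum_div]
  refine sum_le_sum fun k _ => ?_
  rw [div_le_iff₀ hb, one_div_mul_eq_div]
  exact log_add_sub_log_le_div (by positivity) hb.le

lemma sum_le_log_one_add_div (hb : 0 < b) (hc : 1 ≤ c) :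
    ∑ k ∈ range N, 1 / (b * k + c) ≤ (1 + b) / b * log (1 + b * N / c) := by
  rw [← sum_log_add_sub_log hb.le (by positivity), mul_sum]
  refine sum_le_sum fun k _ => ?_
  have hu : 1 ≤ b * k + c := by nlinarith [Nat.cast_nonneg (α := ℝ) k]
  calc 1 / (b * k + c) ≤ (1 + b) / b * (b / (b * k + c + b)) := by
        rw [div_mul_div_cancel₀ hb.ne', div_le_div_iff₀ (by positivity) (by positivity)]
        nlinarith
    _ ≤ _ := by gcongr; exact div_add_le_log_add_sub_log (by positivity) hb.le

lemma sum_one_div_sq_le (hb : 0 < b) (hc : 0 < c) :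
    ∑ k ∈ range N, 1 / (b * k + c) ^ 2 ≤ (1 / c + 1 / b) / c := by
  calc ∑ k ∈ range N, 1 / (b * k + c) ^ 2
      ≤ ∑ k ∈ range N,
          (c + b) / (c * b) * (1 / (b * k + c) - 1 / (b * (k + 1 : ℕ) + c)) := by
        refine sum_le_sum fun k _ => ?_
        have := one_div_sq_le_mul_sub hb hc (le_add_of_nonneg_left (by positivity : 0 ≤ b * k))
        rwa [Nat.cast_succ, mul_add_one, add_right_comm]
    _ = (c + b) / (c * b) * (1 / c - 1 / (b * N + c)) := by
        rw [← mul_sum, sum_range_sub' (fun k : ℕ => 1 / (b * k + c))]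
        simp
    _ ≤ (c + b) / (c * b) * (1 / c) := by gcongr; exact sub_le_self _ (by positivity)
    _ = (1 / c + 1 / b) / c := by field_simp; ring

lemma mul_sum_one_div_sq_le (hb : 0 < b) (hc : 1 ≤ c) (ht : 0 ≤ t) (htc : t ≤ c) :
    t * ∑ k ∈ range N, 1 / (b * k + c) ^ 2 ≤ 1 + 1 / b := by
  have hc0 : 0 < c := by linarith
  calc t * ∑ k ∈ range N, 1 / (b * k + c) ^ 2 ≤ t * ((1 / c + 1 / b) / c) := by
        gcongr; exact sum_one_div_sq_le hb hc0
    _ = t / c * (1 / c + 1 / b) := by ring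
    _ ≤ 1 * (1 + 1 / b) := by
        gcongr
        · exact (div_le_one hc0).2 htc
        · exact div_le_one_of_le₀ hc hc0.le
    _ = 1 + 1 / b := one_mul _

lemma log_one_add_le_two_mul_sqrt (hu : 0 ≤ u) : log (1 + u) ≤ 2 * √u := by
  rw [log_le_iff_le_exp (by positivity)]
  calc 1 + u ≤ 1 + 2 * √u + (2 * √u) ^ 2 / 2 := by nlinarith [sq_sqrt hu, sqrt_nonneg u]
    _ ≤ exp (2 * √u) := quadratic_le_exp_of_nonneg (by positivity)

end HarmonicSums

section LamBounds

variable {b c h : ℝ} {N : ℕ}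

lemma sum_le_dLam (hb : 0 ≤ b) (hc : 0 < c) (hch : c ≤ h) :
    ∑ k ∈ range N, c / 2 / (b * k + (1 + c)) ≤ dLam b N h := by
  refine sum_le_sum fun k _ => ?_
  have hk : 0 ≤ b * k := by positivity
  calc c / 2 / (b * k + (1 + c)) ≤ h / 2 / (b * k + (1 + h)) := by
        rw [div_le_div_iff₀ (by linarith) (by linarith)]
        nlinarith
    _ = (b * k + (1 + h) - (b * k + (1 + h / 2))) / (b * k + (1 + h)) := by ring
    _ ≤ _ := div_le_digamma_sub (by linarith) (by linarith)

lemma dLam_nonneg (hb : 0 ≤ b) (hh : 0 < h) : 0 ≤ dLam b N h :=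
  (sum_nonneg fun k _ => by positivity).trans (sum_le_dLam hb hh le_rfl)

lemma log_le_dLam (hb : 0 < b) (hc : 0 < c) (hch : c ≤ h) :
    c / (2 * b) * log (1 + b * N / (1 + c)) ≤ dLam b N h := by
  calc c / (2 * b) * log (1 + b * N / (1 + c)) = c / 2 * (log (1 + b * N / (1 + c)) / b) := by
        ring
    _ ≤ c / 2 * ∑ k ∈ range N, 1 / (b * k + (1 + c)) := by
        gcongr; exact log_one_add_div_le_sum hb (by positivity)
    _ = ∑ k ∈ range N, c / 2 / (b * k + (1 + c)) := by simp only [mul_sum, mul_one_div]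
    _ ≤ dLam b N h := sum_le_dLam hb.le hc hch

lemma natCast_mul_le_dLam (hb : 0 ≤ b) (hc : 0 < c) (hch : c ≤ h) :
    N * (c / 2 / (b * N + (1 + c))) ≤ dLam b N h := by
  calc N * (c / 2 / (b * N + (1 + c))) = ∑ _k ∈ range N, c / 2 / (b * N + (1 + c)) := by
        rw [sum_const, card_range, nsmul_eq_mul]
    _ ≤ ∑ k ∈ range N, c / 2 / (b * k + (1 + c)) := by
        refine sum_le_sum fun k hk => div_le_div_of_nonneg_left (by positivity) (by positivity) ?_
        gcongr
        exact_mod_cast (mem_range.1 hk).le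
    _ ≤ dLam b N h := sum_le_dLam hb hc hch

lemma dLam_le (hb : 0 < b) (hh : 0 < h) :
    dLam b N h ≤ h / 2 * ((1 + b) / b) * log (1 + b * N / (1 + h / 2)) + (1 + 1 / b) := by
  have hc : (1 : ℝ) ≤ 1 + h / 2 := by linarith
  calc dLam b N h ≤ ∑ k ∈ range N,
        h / 2 * (1 / (b * k + (1 + h / 2)) + 1 / (b * k + (1 + h / 2)) ^ 2) := by
        refine sum_le_sum fun k _ => ?_
        have hk : 0 ≤ b * k := by positivity
        exact (digamma_sub_le (by positivity) (by linarith)).trans_eq (by ring)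
    _ = h / 2 * ∑ k ∈ range N, 1 / (b * k + (1 + h / 2))
        + h / 2 * ∑ k ∈ range N, 1 / (b * k + (1 + h / 2)) ^ 2 := by
        rw [← mul_add, ← sum_add_distrib, mul_sum]
    _ ≤ h / 2 * ((1 + b) / b * log (1 + b * N / (1 + h / 2))) + (1 + 1 / b) := by
        gcongr
        · exact sum_le_log_one_add_div hb hc
        · exact mul_sum_one_div_sq_le hb hc (by positivity) (by linarith)
    _ = _ := by ring

lemma dLam_le_sqrt (hb : 0 < b) (hh : 0 < h) :
    dLam b N h ≤ (1 + b) / b * √(2 * b * h * N) + (1 + 1 / b) := by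
  have hratio : b * N / (1 + h / 2) ≤ 2 * b * N / h := by
    rw [div_le_div_iff₀ (by positivity) hh]
    nlinarith [mul_nonneg hb.le (Nat.cast_nonneg (α := ℝ) N)]
  have hlog : h / 2 * log (1 + b * N / (1 + h / 2)) ≤ √(2 * b * h * N) := by
    calc h / 2 * log (1 + b * N / (1 + h / 2)) ≤ h / 2 * (2 * √(b * N / (1 + h / 2))) := by
          gcongr; exact log_one_add_le_two_mul_sqrt (by positivity)
      _ ≤ h / 2 * (2 * √(2 * b * N / h)) := by gcongr ?_ * (2 * ?_); exact sqrt_le_sqrt hratio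
      _ = √(h ^ 2 * (2 * b * N / h)) := by rw [sqrt_mul (sq_nonneg h), sqrt_sq hh.le]; ring
      _ = √(2 * b * h * N) := by congr 1; field_simp
  calc dLam b N h ≤ h / 2 * ((1 + b) / b) * log (1 + b * N / (1 + h / 2)) + (1 + 1 / b) :=
        dLam_le hb hh
    _ = (1 + b) / b * (h / 2 * log (1 + b * N / (1 + h / 2))) + (1 + 1 / b) := by ring
    _ ≤ (1 + b) / b * √(2 * b * h * N) + (1 + 1 / b) := by gcongr

lemma d2Lam_le (hb : 0 < b) (hh : 0 ≤ h) :
    d2Lam b N h ≤ (1 + b) / b * log (1 + b * N / (1 + h)) + (1 + 1 / b) := by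
  have hc : (1 : ℝ) ≤ 1 + h := by linarith
  calc d2Lam b N h ≤ ∑ k ∈ range N, (1 / (b * k + (1 + h)) + 1 / (b * k + (1 + h)) ^ 2) := by
        refine sum_le_sum fun k _ => ?_
        have := trigamma_le (by positivity : 0 < b * k + (1 + h))
        have := trigamma_nonneg (b * k + (1 + h / 2))
        linarith
    _ = ∑ k ∈ range N, 1 / (b * k + (1 + h))
        + 1 * ∑ k ∈ range N, 1 / (b * k + (1 + h)) ^ 2 := by
        rw [sum_add_distrib, one_mul]
    _ ≤ _ := add_le_add (sum_le_log_one_add_div hb hc)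
        (mul_sum_one_div_sq_le hb hc zero_le_one hc)

lemma le_d2Lam (hb : 0 < b) (hh : 0 ≤ h) :
    log (1 + b * N / (1 + h)) / (2 * b) - (1 + 1 / b) ≤ d2Lam b N h := by
  have hc₁ : (1 : ℝ) ≤ 1 + h := by linarith
  have hc₂ : (1 : ℝ) ≤ 1 + h / 2 := by linarith
  calc log (1 + b * N / (1 + h)) / (2 * b) - (1 + 1 / b)
      ≤ (∑ k ∈ range N, 1 / (b * k + (1 + h))
          - h * ∑ k ∈ range N, 1 / (b * k + (1 + h)) ^ 2
          - 1 * ∑ k ∈ range N, 1 / (b * k + (1 + h / 2)) ^ 2) / 2 := by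
        have := log_one_add_div_le_sum (N := N) hb (by positivity : 0 < 1 + h)
        have := mul_sum_one_div_sq_le (N := N) hb hc₁ hh (by linarith)
        have := mul_sum_one_div_sq_le (N := N) hb hc₂ zero_le_one hc₂
        have : log (1 + b * N / (1 + h)) / (2 * b) = log (1 + b * N / (1 + h)) / b / 2 := by ring
        linarith
    _ = ∑ k ∈ range N, (1 / (b * k + (1 + h)) - h * (1 / (b * k + (1 + h)) ^ 2)
          - 1 * (1 / (b * k + (1 + h / 2)) ^ 2)) / 2 := by
        rw [← sum_div, sum_sub_distrib, sum_sub_distrib, mul_sum, mul_sum]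
    _ ≤ d2Lam b N h := by
        refine sum_le_sum fun k _ => ?_
        have hk : 0 ≤ b * k := by positivity
        have hv₁ : 0 < b * k + (1 + h) := by linarith
        have hv₂ : 0 < b * k + (1 + h / 2) := by linarith
        -- for `v₂ = b k + 1 + h / 2` and `v₁ = v₂ + h / 2 ≤ 2 v₂`:
        -- `(1 / v₂ - 1 / v₁) v₁ ^ 2 = (h / 2) v₁ / v₂ ≤ h`
        have key : 1 / (b * k + (1 + h / 2))
            ≤ 1 / (b * k + (1 + h)) + h * (1 / (b * k + (1 + h)) ^ 2) := by
          rw [mul_one_div, div_add_div _ _ hv₁.ne' (by positivity),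
            div_le_div_iff₀ hv₂ (by positivity)]
          nlinarith [mul_nonneg (mul_nonneg hh hv₁.le) (by linarith : (0 : ℝ) ≤ b * k + 1)]
        have := one_div_le_trigamma hv₁
        have := trigamma_le hv₂
        linarith

lemma d2Lam_le_of_mul_le (hb : 0 < b) {ε : ℝ} (hε : 0 < ε) (hh : 0 ≤ h)
    (hεh : ε * N ≤ h) :
    d2Lam b N h ≤ (1 + b) / b * log (1 + b / ε) + (1 + 1 / b) := by
  refine (d2Lam_le hb hh).trans ?_
  have hratio : b * N / (1 + h) ≤ b / ε := by
    rw [div_le_div_iff₀ (by positivity) hε]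
    nlinarith
  gcongr

lemma div_le_dLam_div (hb : 0 ≤ b) {ε : ℝ} (hε : 0 < ε) (hN : 1 ≤ N)
    (hεh : ε * N ≤ h) :
    ε / (2 * (b + 1 + ε)) ≤ dLam b N h / N := by
  have hN' : (1 : ℝ) ≤ N := by exact_mod_cast hN
  rw [le_div_iff₀ (by positivity)]
  calc ε / (2 * (b + 1 + ε)) * N ≤ N * (ε * N / 2 / (b * N + (1 + ε * N))) := by
        rw [mul_comm]
        refine mul_le_mul_of_nonneg_left ?_ (by positivity)
        rw [div_le_div_iff₀ (by positivity) (by positivity)]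
        nlinarith [mul_le_mul_of_nonneg_left hN' (by positivity : (0 : ℝ) ≤ ε * (b + 1 + ε))]
    _ ≤ dLam b N h := natCast_mul_le_dLam hb (by positivity) hεh

end LamBounds

section Sequences

variable {b : ℝ} {a h v : ℕ → ℝ}

lemma tendsto_div_natCast_of_forall_eventually_lt (hh : ∀ᶠ N in atTop, 0 < h N)
    (H : ∀ ε > 0, ∀ᶠ N : ℕ in atTop, h N < ε * N) :
    Tendsto (fun N : ℕ => h N / N) atTop (𝓝 0) := by
  refine tendsto_order.2 ⟨fun ε hε => hh.mono fun N hN => hε.trans_le ?_, fun ε hε => ?_⟩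
  · exact div_nonneg hN.le N.cast_nonneg
  filter_upwards [H ε hε, eventually_gt_atTop 0] with N hN hN0
  rwa [div_lt_iff₀ (by exact_mod_cast hN0)]

lemma tendsto_div_natCast_of_tendsto_d2Lam (hb : 0 < b) (hh : ∀ᶠ N in atTop, 0 < h N)
    (hv : ∀ᶠ N in atTop, v N = d2Lam b N (h N)) (hvlim : Tendsto v atTop atTop) :
    Tendsto (fun N : ℕ => h N / N) atTop (𝓝 0) := by
  refine tendsto_div_natCast_of_forall_eventually_lt hh fun ε hε => ?_
  filter_upwards [hvlim.eventually_gt_atTop ((1 + b) / b * log (1 + b / ε) + (1 + 1 / b)), hh, hv]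
    with N hvN hN hvN'
  by_contra! hεh
  rw [hvN'] at hvN
  exact (d2Lam_le_of_mul_le hb hε hN.le hεh).not_gt hvN

lemma tendsto_d2Lam_of_tendsto_div_natCast (hb : 0 < b) (hh : ∀ᶠ N in atTop, 0 ≤ h N)
    (hv : ∀ᶠ N in atTop, v N = d2Lam b N (h N))
    (hlim : Tendsto (fun N : ℕ => h N / N) atTop (𝓝 0)) : Tendsto v atTop atTop := by
  have hratio : Tendsto (fun N : ℕ => b * N / (1 + h N)) atTop atTop := by
    have h0 : Tendsto (fun N : ℕ => (1 + h N) / N) atTop (𝓝[>] 0) := by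
      refine tendsto_nhdsWithin_iff.2 ⟨?_, ?_⟩
      · simpa [add_div] using tendsto_one_div_atTop_nhds_zero_nat.add hlim
      · filter_upwards [hh, eventually_gt_atTop 0] with N hN hN0
        exact Set.mem_Ioi.2 (div_pos (by linarith) (Nat.cast_pos.2 hN0))
    refine (h0.inv_tendsto_nhdsGT_zero.const_mul_atTop hb).congr fun N => ?_
    simp only [Pi.inv_apply, inv_div, mul_div_assoc]
  have hlog := (tendsto_log_atTop.comp (tendsto_atTop_add_const_left _ 1 hratio)).atTop_div_const
    (by positivity : 0 < 2 * b)
  refine tendsto_atTop_mono' _ ?_ (tendsto_atTop_add_const_right _ (-(1 + 1 / b)) hlog)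
  filter_upwards [hh, hv] with N hN hvN
  rw [hvN, ← sub_eq_add_neg]
  exact le_d2Lam hb hN

lemma tendsto_dLam_div_natCast_of_tendsto_div_natCast (hb : 0 < b) (hh : ∀ᶠ N in atTop, 0 < h N)
    (ha : ∀ᶠ N in atTop, a N = dLam b N (h N))
    (hlim : Tendsto (fun N : ℕ => h N / N) atTop (𝓝 0)) :
    Tendsto (fun N : ℕ => a N / N) atTop (𝓝 0) := by
  have hbound : Tendsto (fun N : ℕ => (1 + b) / b * √(2 * b * (h N / N))
      + (1 + 1 / b) * (1 / N)) atTop (𝓝 0) := by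
    simpa using ((hlim.const_mul (2 * b)).sqrt.const_mul ((1 + b) / b)).add
      (tendsto_one_div_atTop_nhds_zero_nat.const_mul (1 + 1 / b))
  refine squeeze_zero' ?_ ?_ hbound
  · filter_upwards [hh, ha] with N hN haN
    rw [haN]
    exact div_nonneg (dLam_nonneg hb.le hN) N.cast_nonneg
  · filter_upwards [hh, ha, eventually_gt_atTop 0] with N hN haN hN0
    have hN0' : (0 : ℝ) < N := by exact_mod_cast hN0
    have hsqrt : √(2 * b * h N * N) = √(2 * b * (h N / N)) * N := by
      rw [show 2 * b * h N * N = 2 * b * (h N / N) * N ^ 2 by field_simp,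
        sqrt_mul' _ (by positivity), sqrt_sq hN0'.le]
    rw [haN]
    calc dLam b N (h N) / N ≤ ((1 + b) / b * √(2 * b * h N * N) + (1 + 1 / b)) / N := by
          gcongr; exact dLam_le_sqrt hb hN
      _ = _ := by rw [hsqrt]; field_simp

lemma tendsto_div_natCast_of_tendsto_dLam_div_natCast (hb : 0 ≤ b)
    (hh : ∀ᶠ N in atTop, 0 < h N)
    (ha : ∀ᶠ N in atTop, a N = dLam b N (h N))
    (hlim : Tendsto (fun N : ℕ => a N / N) atTop (𝓝 0)) :
    Tendsto (fun N : ℕ => h N / N) atTop (𝓝 0) := by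
  refine tendsto_div_natCast_of_forall_eventually_lt hh fun ε hε => ?_
  have hδ : 0 < ε / (2 * (b + 1 + ε)) := div_pos hε (by linarith)
  filter_upwards [(tendsto_order.1 hlim).2 _ hδ, ha, eventually_ge_atTop 1] with N haN haN' hN
  by_contra! hεh
  rw [haN'] at haN
  exact (div_le_dLam_div hb hε hN hεh).not_gt haN

lemma exists_pos_eventually_le_dLam_div_log (hb : 0 < b)
    (ha : ∀ᶠ N in atTop, a N = dLam b N (h N))
    (hlow : ∃ c > 0, ∀ᶠ N in atTop, c ≤ h N) :
    ∃ c > 0, ∀ᶠ N : ℕ in atTop, c ≤ a N / log N := by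
  obtain ⟨c, hc, hch⟩ := hlow
  refine ⟨c / (4 * b), by positivity, ?_⟩
  have hlogN : Tendsto (fun N : ℕ => log N) atTop atTop :=
    tendsto_log_atTop.comp tendsto_natCast_atTop_atTop
  filter_upwards [hch, ha, hlogN.eventually_ge_atTop (-2 * log (b / (1 + c))),
    hlogN.eventually_gt_atTop 0, eventually_gt_atTop 0] with N hcN haN hN hlog hN0
  have hN0 : (0 : ℝ) < N := Nat.cast_pos.2 hN0
  have key : log N ≤ 2 * log (1 + b * N / (1 + c)) := by
    have : log (b / (1 + c) * N) ≤ log (1 + b * N / (1 + c)) :=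
      log_le_log (by positivity) (by rw [div_mul_eq_mul_div]; linarith)
    rw [log_mul (by positivity) hN0.ne'] at this
    linarith
  rw [haN, le_div_iff₀ hlog]
  calc c / (4 * b) * log N ≤ c / (4 * b) * (2 * log (1 + b * N / (1 + c))) := by gcongr
    _ = c / (2 * b) * log (1 + b * N / (1 + c)) := by ring
    _ ≤ dLam b N (h N) := log_le_dLam hb hc hcN

lemma exists_pos_eventually_le_of_dLam_div_log (hb : 0 < b) (hh : ∀ᶠ N in atTop, 0 < h N)
    (ha : ∀ᶠ N in atTop, a N = dLam b N (h N))
    (hlow : ∃ c > 0, ∀ᶠ N : ℕ in atTop, c ≤ a N / log N) :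
    ∃ c > 0, ∀ᶠ N in atTop, c ≤ h N := by
  obtain ⟨c, hc, hca⟩ := hlow
  refine ⟨c / (2 * ((1 + b) / b)), by positivity, ?_⟩
  have hlogN : Tendsto (fun N : ℕ => log N) atTop atTop :=
    tendsto_log_atTop.comp tendsto_natCast_atTop_atTop
  filter_upwards [hca, hh, ha, hlogN.eventually_gt_atTop 0,
    hlogN.eventually_ge_atTop (2 * (1 + 1 / b) / c),
    tendsto_natCast_atTop_atTop.eventually_ge_atTop (1 + b)] with N hcN hN haN hlog hlogc hNb
  rw [haN, le_div_iff₀ hlog] at hcN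
  rw [div_le_iff₀ hc] at hlogc
  have hN0 : (0 : ℝ) < N := by linarith
  have hlogle : log (1 + b * N / (1 + h N / 2)) ≤ 2 * log N := by
    have hratio : b * N / (1 + h N / 2) ≤ b * N :=
      div_le_self (by positivity) (by linarith)
    calc log (1 + b * N / (1 + h N / 2)) ≤ log (N * N) :=
          log_le_log (by positivity) (by nlinarith)
      _ = 2 * log N := by rw [log_mul hN0.ne' hN0.ne']; ring
  have hupper := dLam_le (N := N) hb hN
  have hmul : h N / 2 * ((1 + b) / b) * log (1 + b * N / (1 + h N / 2))
      ≤ h N / 2 * ((1 + b) / b) * (2 * log N) :=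
    mul_le_mul_of_nonneg_left hlogle (mul_nonneg (by linarith) (by positivity))
  have hkey : c / 2 * log N ≤ h N * ((1 + b) / b) * log N := by linarith
  rw [div_le_iff₀ (by positivity)]
  linarith [le_of_mul_le_mul_right hkey hlog]

end Sequences

lemma exists_pos_eventually_le_const_mul_iff {α : Type*} {F : Filter α} {f : α → ℝ}
    {β : ℝ} (hβ : 0 < β) :
    (∃ c > 0, ∀ᶠ x in F, c ≤ β * f x) ↔ ∃ c > 0, ∀ᶠ x in F, c ≤ f x := by
  constructor
  · rintro ⟨c, hc, hf⟩
    exact ⟨c / β, div_pos hc hβ, hf.mono fun x hx => (div_le_iff₀' hβ).2 hx⟩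
  · rintro ⟨c, hc, hf⟩
    exact ⟨β * c, mul_pos hβ hc, hf.mono fun x hx => mul_le_mul_of_nonneg_left hx hβ.le⟩

end CbetaE

open CbetaE in
theorem moderate_regime_characterization_general (β : ℝ) (hβ : 0 < β) (a l : ℕ → ℝ)
    (hl : ∀ N : ℕ, 1 ≤ N → 0 < l N)
    (heq : ∀ N : ℕ, 1 ≤ N → deriv (Lam β N) (β * l N) = a N) :
    (((∃ c > (0 : ℝ), ∀ᶠ N : ℕ in atTop, c ≤ l N) ∧
        Tendsto (fun N : ℕ => deriv (deriv (Lam β N)) (β * l N)) atTop atTop) ↔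
      ((∃ c > (0 : ℝ), ∀ᶠ N : ℕ in atTop, c ≤ l N) ∧
        Tendsto (fun N : ℕ => l N / N) atTop (nhds 0))) ∧
    (((∃ c > (0 : ℝ), ∀ᶠ N : ℕ in atTop, c ≤ l N) ∧
        Tendsto (fun N : ℕ => l N / N) atTop (nhds 0)) ↔
      ((∃ c > (0 : ℝ), ∀ᶠ N : ℕ in atTop, c ≤ a N / Real.log N) ∧
        Tendsto (fun N : ℕ => a N / N) atTop (nhds 0))) := by
  have hb : 0 < β / 2 := half_pos hβ
  have hh : ∀ᶠ N in atTop, 0 < β * l N :=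
    eventually_atTop.2 ⟨1, fun N hN => mul_pos hβ (hl N hN)⟩
  have ha : ∀ᶠ N in atTop, a N = dLam (β / 2) N (β * l N) := by
    filter_upwards [hh, eventually_ge_atTop 1] with N hN hN1
    rw [← heq N hN1, deriv_Lam hβ.le (by linarith)]
  have hv : ∀ᶠ N in atTop,
      deriv (deriv (Lam β N)) (β * l N) = d2Lam (β / 2) N (β * l N) := by
    filter_upwards [hh] with N hN using deriv_deriv_Lam hβ.le (by linarith)
  have hscale : Tendsto (fun N : ℕ => β * l N / N) atTop (𝓝 0) ↔
      Tendsto (fun N : ℕ => l N / N) atTop (𝓝 0) := by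
    simpa [smul_eq_mul, mul_div_assoc] using
      tendsto_const_smul_iff₀ (f := fun N : ℕ => l N / N) (l := atTop) (a := 0) hβ.ne'
  rw [← exists_pos_eventually_le_const_mul_iff hβ, ← hscale]
  refine ⟨and_congr_right fun _ => ⟨tendsto_div_natCast_of_tendsto_d2Lam hb hh hv,
    tendsto_d2Lam_of_tendsto_div_natCast hb (hh.mono fun _ => le_of_lt) hv⟩, ⟨?_, ?_⟩⟩
  · rintro ⟨hlow, hlim⟩
    exact ⟨exists_pos_eventually_le_dLam_div_log hb ha hlow,
      tendsto_dLam_div_natCast_of_tendsto_div_natCast hb hh ha hlim⟩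
  · rintro ⟨hlow, hlim⟩
    exact ⟨exists_pos_eventually_le_of_dLam_div_log hb hh ha hlow,
      tendsto_div_natCast_of_tendsto_dLam_div_natCast hb.le hh ha hlim⟩

open CbetaE in
/-- Characterization of the regime of moderate deviations / balanced sequences
(Proposition 2.9). Here `a_N = Λ'_{N,β}(β λ_N)` and `v_N = Λ''_{N,β}(β λ_N)`;
`liminf > 0` conditions are phrased as eventual lower bounds. -/
theorem moderate_regime_characterization (β : ℝ) (hβ : 0 < β) (a l : ℕ → ℝ)
    (ha : ∀ N : ℕ, 1 ≤ N → 0 < a N ∧ a N < (N : ℝ) * Real.log 2)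
    (hl : ∀ N : ℕ, 1 ≤ N → 0 < l N)
    (heq : ∀ N : ℕ, 1 ≤ N → deriv (Lam β N) (β * l N) = a N) :
    (((∃ c > (0 : ℝ), ∀ᶠ N : ℕ in atTop, c ≤ l N) ∧
        Tendsto (fun N : ℕ => deriv (deriv (Lam β N)) (β * l N)) atTop atTop) ↔
      ((∃ c > (0 : ℝ), ∀ᶠ N : ℕ in atTop, c ≤ l N) ∧
        Tendsto (fun N : ℕ => l N / N) atTop (nhds 0))) ∧
    (((∃ c > (0 : ℝ), ∀ᶠ N : ℕ in atTop, c ≤ l N) ∧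
        Tendsto (fun N : ℕ => l N / N) atTop (nhds 0)) ↔
      ((∃ c > (0 : ℝ), ∀ᶠ N : ℕ in atTop, c ≤ a N / Real.log N) ∧
        Tendsto (fun N : ℕ => a N / N) atTop (nhds 0))) :=
  moderate_regime_characterization_general β hβ a l hl heq
end
end
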